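/- arXiv:2105.11718 — 11 statements merged into one kernel-verified Lean document; each statement's English description precedes it below -/
import Mathlib

section
/- Let M be an m × k matrix with entries in {0,1} with k ≥ 1. If the total number of 1-entries of M is strictly less than 2k − 2, then M is not a minimal linear dependency, i.e., it is not the case that both rank(M) = k − 1 and there exists x ∈ ℝ^k with Mx = 0 and supp(x) = [k]. -/
/-!
If `M x = 0` with `x` nowhere zero, no row of `M` can have exactly one nonzero entry, so every
nonzero row of a `{0,1}`-matrix contains at least two ones. Since the rank is at most the number
of nonzero rows, rank `k - 1` forces at least `2 (k - 1)` ones.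
-/

open Finset Matrix

theorem one_lt_card_filter_ne_zero_of_dotProduct_eq_zero {n R : Type*} [Fintype n] [Semiring R]
    [NoZeroDivisors R] [DecidableEq R] {r x : n → R} (hr : r ≠ 0) (hx : ∀ j, x j ≠ 0)
    (h : r ⬝ᵥ x = 0) : 1 < #{j | r j ≠ 0} := by
  by_contra! hle
  obtain ⟨j, hj⟩ := Function.ne_iff.mp hr
  have honly : ∀ b, b ≠ j → r b = 0 := fun b hb => by
    by_contra hrb
    exact hb (card_le_one.mp hle b (by simpa using hrb) j (by simpa using hj))
  have hsingle : r ⬝ᵥ x = r j * x j :=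
    sum_eq_single j (fun b _ hb => by rw [honly b hb, zero_mul]) (by simp)
  exact mul_ne_zero hj (hx j) (hsingle ▸ h)

theorem Matrix.rank_le_card_filter_row_ne_zero {m n K : Type*} [Fintype m] [Fintype n] [Field K]
    [DecidableEq K] (M : Matrix m n K) : M.rank ≤ #{i | M.row i ≠ 0} := by
  rw [rank_eq_finrank_span_row]
  have hspan : Submodule.span K (Set.range M.row) ≤
      Submodule.span K (({i | M.row i ≠ 0} : Finset m).image M.row : Set (n → K)) := by
    rw [Submodule.span_le]
    rintro _ ⟨i, rfl⟩
    by_cases hi : M.row i = 0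
    · rw [hi]
      exact zero_mem _
    · exact Submodule.subset_span (mem_coe.mpr (mem_image_of_mem _ (by simpa using hi)))
  calc _ ≤ _ := Submodule.finrank_mono hspan
    _ ≤ _ := finrank_span_finset_le_card _
    _ ≤ _ := card_image_le

theorem Set.ncard_setOf_prod_eq_sum_card {α β : Type*} [Fintype α] [Fintype β]
    (P : α → β → Prop) [∀ a, DecidablePred (P a)] :
    {p : α × β | P p.1 p.2}.ncard = ∑ a, #{b | P a b} := by
  rw [← coe_filter_univ, ncard_coe_finset, card_filter, Fintype.sum_prod_type]
  simp only [card_filter]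

theorem stmt1_general {m k : ℕ} (M : Matrix (Fin m) (Fin k) ℝ)
    (h01 : ∀ i j, M i j = 0 ∨ M i j = 1)
    (hones : Set.ncard {p : Fin m × Fin k | M p.1 p.2 = 1} < 2 * k - 2) :
    ¬ (M.rank = k - 1 ∧ ∃ x : Fin k → ℝ, M.mulVec x = 0 ∧ ∀ j, x j ≠ 0) := by
  classical
  rintro ⟨hrank, x, hMx, hx⟩
  have hrow : ∀ i ∈ ({i | M.row i ≠ 0} : Finset (Fin m)), 2 ≤ #{j | M i j = 1} := by
    intro i hi
    have hcard_eq : #{j | M i j = 1} = #{j | M i j ≠ 0} :=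
      congrArg card (filter_congr fun j _ => by rcases h01 i j with h | h <;> simp [h])
    rw [hcard_eq]
    exact one_lt_card_filter_ne_zero_of_dotProduct_eq_zero (mem_filter.mp hi).2 hx
      (congrFun hMx i)
  have hcount : 2 * #{i | M.row i ≠ 0} ≤ Set.ncard {p : Fin m × Fin k | M p.1 p.2 = 1} := by
    rw [Set.ncard_setOf_prod_eq_sum_card (fun i j => M i j = 1), mul_comm, ← smul_eq_mul]
    exact (card_nsmul_le_sum _ _ _ hrow).trans (sum_le_sum_of_subset (subset_univ _))
  have := M.rank_le_card_filter_row_ne_zero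
  omega

/-- A {0,1}-matrix with `k ≥ 1` columns and fewer than `2k - 2` ones is not a minimal
linear dependency. -/
theorem stmt1 {m k : ℕ} (hk : 1 ≤ k) (M : Matrix (Fin m) (Fin k) ℝ)
    (h01 : ∀ i j, M i j = 0 ∨ M i j = 1)
    (hones : Set.ncard {p : Fin m × Fin k | M p.1 p.2 = 1} < 2 * k - 2) :
    ¬ (M.rank = k - 1 ∧ ∃ x : Fin k → ℝ, M.mulVec x = 0 ∧ ∀ j, x j ≠ 0) :=
  stmt1_general M h01 hones
end

section
/- Let M be an m × k matrix that is a minimal linear dependency, and let G be the hypergraph on vertex set [k] whose hyperedges are the supports of the nonzero rows of M (rows index hyperedges, columns index vertices). Then G is connected, i.e., all k vertices lie in one connected component. -/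
/-!
If the columns of `M` split into two classes with no row meeting both, then restricting the
full-support kernel vector `x` to each class gives two kernel vectors, and they are linearly
independent because each is nonzero exactly on its own class. So the kernel has dimension at
least two, contradicting `rank M = k - 1`.
-/

namespace Matrix

variable {m n R : Type*} [Fintype n]

theorem mulVec_indicator_eq_zero [NonUnitalNonAssocSemiring R] (M : Matrix m n R) {S : Set n}
    (hS : ∀ u v, u ∈ S → (∃ r, M r u ≠ 0 ∧ M r v ≠ 0) → v ∈ S) {x : n → R}
    (hx : M *ᵥ x = 0) : M *ᵥ S.indicator x = 0 := by
  classical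
  funext r
  by_cases hr : ∃ u ∈ S, M r u ≠ 0
  · obtain ⟨u, huS, hru⟩ := hr
    have hrow : ∀ j, M r j * S.indicator x j = M r j * x j := by
      intro j
      by_cases hj : j ∈ S
      · rw [Set.indicator_of_mem hj]
      · have hMj : M r j = 0 := by_contra fun h => hj (hS u j huS ⟨r, hru, h⟩)
        rw [hMj, zero_mul, zero_mul]
    simpa only [mulVec, dotProduct, hrow] using congrFun hx r
  · push Not at hr
    refine Finset.sum_eq_zero fun j _ => ?_
    by_cases hj : j ∈ S
    · exact mul_eq_zero_of_left (hr j hj) _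
    · rw [Set.indicator_of_notMem hj, mul_zero]

theorem rank_add_finrank_ker [Field R] (M : Matrix m n R) :
    M.rank + Module.finrank R (LinearMap.ker M.mulVecLin) = Fintype.card n := by
  simpa [rank] using LinearMap.finrank_range_add_finrank_ker M.mulVecLin

theorem rank_add_two_le_of_linearIndependent [Field R] (M : Matrix m n R) {y z : n → R}
    (hy : M *ᵥ y = 0) (hz : M *ᵥ z = 0) (hyz : LinearIndependent R ![y, z]) :
    M.rank + 2 ≤ Fintype.card n := by
  have hspan : Submodule.span R (Set.range ![y, z]) ≤ LinearMap.ker M.mulVecLin := by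
    rw [Submodule.span_le]
    rintro v ⟨i, rfl⟩
    fin_cases i
    exacts [hy, hz]
  have hker : 2 ≤ Module.finrank R (LinearMap.ker M.mulVecLin) :=
    calc 2 = Module.finrank R (Submodule.span R (Set.range ![y, z])) := by
          rw [finrank_span_eq_card hyz, Fintype.card_fin]
      _ ≤ _ := Submodule.finrank_mono hspan
  have := M.rank_add_finrank_ker
  omega

end Matrix

theorem linearIndependent_indicator_indicator_compl {n R : Type*} [Ring R] [NoZeroDivisors R]
    {S : Set n} {x : n → R} {a b : n} (ha : a ∈ S) (hb : b ∉ S) (hxa : x a ≠ 0)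
    (hxb : x b ≠ 0) : LinearIndependent R ![S.indicator x, Sᶜ.indicator x] := by
  rw [LinearIndependent.pair_iff]
  intro s t hst
  have hsa := congrFun hst a
  have htb := congrFun hst b
  simp only [Pi.add_apply, Pi.smul_apply, smul_eq_mul, Pi.zero_apply, Set.indicator_of_mem ha,
    Set.indicator_of_notMem (Set.notMem_compl_iff.mpr ha), Set.indicator_of_notMem hb,
    Set.indicator_of_mem (Set.mem_compl hb), mul_zero, add_zero, zero_add] at hsa htb
  exact ⟨(mul_eq_zero.mp hsa).resolve_right hxa, (mul_eq_zero.mp htb).resolve_right hxb⟩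

/-- The hypergraph whose hyperedges are the supports of the rows of a minimal linear
dependency is connected. -/
theorem stmt3 {m k : ℕ} (M : Matrix (Fin m) (Fin k) ℝ)
    (hrank : M.rank = k - 1)
    (hdep : ∃ x : Fin k → ℝ, M.mulVec x = 0 ∧ ∀ j, x j ≠ 0)
    (a b : Fin k) :
    Relation.ReflTransGen (fun u v : Fin k => ∃ r, M r u ≠ 0 ∧ M r v ≠ 0) a b := by
  obtain ⟨x, hMx, hx⟩ := hdep
  by_contra hab
  set S := {v | Relation.ReflTransGen (fun u v : Fin k => ∃ r, M r u ≠ 0 ∧ M r v ≠ 0) a v}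
  have hS : ∀ u v, u ∈ S → (∃ r, M r u ≠ 0 ∧ M r v ≠ 0) → v ∈ S :=
    fun _ _ => Relation.ReflTransGen.tail
  have hMy := M.mulVec_indicator_eq_zero hS hMx
  have hMz : M.mulVec (Sᶜ.indicator x) = 0 := by
    rw [Set.indicator_compl, Matrix.mulVec_sub, hMx, hMy, sub_zero]
  have hle := M.rank_add_two_le_of_linearIndependent hMy hMz
    (linearIndependent_indicator_indicator_compl Relation.ReflTransGen.refl hab (hx a) (hx b))
  rw [Fintype.card_fin, hrank] at hle
  omega
end

section
/- Let k ≥ 1 and let M be a {0,1}-matrix with k columns that is a minimal linear dependency with exactly 2k − 2 entries equal to 1. Then the nonzero rows of M form the edge-vertex incidence matrix of a tree on k vertices (each nonzero row has exactly two 1s and these rows encode the k − 1 edges of a tree). Conversely, every {0,1}-matrix whose nonzero rows form the edge-vertex incidence matrix of a tree on k vertices is a minimal linear dependency with 2k − 2 ones. -/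
/-- Row `r` of `M` has ones exactly at columns `i` and `j` (the incidence row of edge `{i,j}`). -/
def IsEdgeRow {m k : ℕ} (M : Matrix (Fin m) (Fin k) ℝ) (r : Fin m) (i j : Fin k) : Prop :=
  ∀ l, M r l = if l = i ∨ l = j then 1 else 0

/-!
Suppose the nonzero rows of a {0,1}-matrix `M` are the incidence rows of the edges of a graph `G`
on the columns, one row per edge. Then `M x = 0` says exactly that `x` takes opposite values at
the two ends of every edge. If some such `x` vanishes nowhere, these vectors form a line iff `G` is
connected (restricting `x` to one component gives a second solution otherwise), so
`rank M = k - 1` iff `G` is connected; and a graph with `k - 1` edges on `k` vertices is a tree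
iff it is connected. For a tree, a proper 2-colouring gives the `±1` kernel vector.

Conversely, a kernel vector of full support rules out rows with a single one, and the row space
has dimension `k - 1`, so there are at least `k - 1` distinct nonzero rows, each with at least two
ones. With only `2k - 2` ones in total, every nonzero row has exactly two ones and no two nonzero
rows coincide: they are the incidence rows of a graph with `k - 1` edges.
-/

open Finset Matrix SimpleGraph

namespace SimpleGraph

variable {V : Type*} (G : SimpleGraph V) (K : Type*)

section CommRing

variable [CommRing K]

/-- The kernel of the unsigned incidence matrix of `G`. -/
def adjSumZero : Submodule K (V → K) where
  carrier := {y | ∀ a b, G.Adj a b → y a + y b = 0}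
  add_mem' {y z} hy hz a b h := by
    simp only [Pi.add_apply]
    linear_combination hy a b h + hz a b h
  zero_mem' _ _ _ := add_zero 0
  smul_mem' c y hy a b h := by
    simp only [Pi.smul_apply, smul_eq_mul]
    linear_combination c * hy a b h

variable {G K}

lemma Reachable.apply_eq_zero_of_mem_adjSumZero {u v : V} (h : G.Reachable u v) {y : V → K}
    (hy : y ∈ G.adjSumZero K) (hu : y u = 0) : y v = 0 := by
  obtain ⟨p⟩ := h
  induction p with
  | nil => exact hu
  | cons hadj _ ih => exact ih (by simpa [hu] using hy _ _ hadj)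

lemma Colorable.exists_mem_adjSumZero [Nontrivial K] (h : G.Colorable 2) :
    ∃ x ∈ G.adjSumZero K, ∀ v, x v ≠ 0 := by
  obtain ⟨c⟩ := h
  refine ⟨fun v => if c v = 0 then 1 else -1, fun a b hab => ?_, fun v => ?_⟩
  · have := c.valid hab
    dsimp only
    split_ifs with ha hb hb
    · exact absurd (ha.trans hb.symm) this
    · ring
    · ring
    · exact absurd ((Fin.eq_one_of_ne_zero _ ha).trans (Fin.eq_one_of_ne_zero _ hb).symm) this
  · dsimp only
    split_ifs <;> simp

end CommRing

variable {G K} [Field K]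

lemma connected_iff_adjSumZero_eq_span [Nonempty V] {x : V → K} (hx : x ∈ G.adjSumZero K)
    (hx0 : ∀ v, x v ≠ 0) : G.Connected ↔ G.adjSumZero K = K ∙ x := by
  obtain ⟨v⟩ := ‹Nonempty V›
  constructor
  · refine fun hG => le_antisymm (fun y hy => ?_) ((Submodule.span_singleton_le_iff_mem _ _).2 hx)
    set c := y v / x v
    have hz : y - c • x ∈ G.adjSumZero K := sub_mem hy (Submodule.smul_mem _ c hx)
    have hzv : (y - c • x) v = 0 := by simp [c, hx0 v]
    refine Submodule.mem_span_singleton.2 ⟨c, funext fun u => ?_⟩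
    have := (hG v u).apply_eq_zero_of_mem_adjSumZero hz hzv
    simp only [Pi.sub_apply, Pi.smul_apply, sub_eq_zero] at this
    exact this.symm
  · intro h
    -- `x` restricted to the component of `v` still cancels across every edge
    set C := {u | G.Reachable v u}
    have hy : C.indicator x ∈ G.adjSumZero K := fun a b hab => by
      by_cases ha : G.Reachable v a
      · have hb : G.Reachable v b := ha.trans hab.reachable
        simpa [C, Set.indicator_of_mem, ha, hb] using hx a b hab
      · have hb : ¬ G.Reachable v b := fun hb => ha (hb.trans hab.symm.reachable)
        simp [C, Set.indicator_of_notMem, ha, hb]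
    rw [h] at hy
    obtain ⟨c, hc⟩ := Submodule.mem_span_singleton.1 hy
    have hc0 : c ≠ 0 := by
      rintro rfl
      simpa [C, hx0 v] using (congrFun hc v).symm
    have hreach : ∀ u, G.Reachable v u := fun u => by
      by_contra hu
      have := congrFun hc u
      simp [C, Set.indicator_of_notMem, hu, hc0, hx0 u] at this
    exact (connected_iff G).2 ⟨fun a b => (hreach a).symm.trans (hreach b), ⟨v⟩⟩

end SimpleGraph

namespace Matrix

variable {m n R : Type*}

section Semiring

variable [Semiring R] (M : Matrix m n R)

open Classical in
noncomputable def rowOnes [Fintype n] (r : m) : Finset n := {l | M r l = 1}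

open Classical in
noncomputable def nonzeroRows [Fintype m] : Finset m := {r | M r ≠ 0}

variable {M}

@[simp]
lemma mem_nonzeroRows [Fintype m] {r : m} : r ∈ M.nonzeroRows ↔ M r ≠ 0 := by
  simp [nonzeroRows]

variable [Fintype n] [Nontrivial R]

lemma mulVec_apply_eq_sum_rowOnes {r : m} (hr : ∀ l, M r l = 0 ∨ M r l = 1) (y : n → R) :
    (M *ᵥ y) r = ∑ l ∈ M.rowOnes r, y l := by
  rw [mulVec, dotProduct, rowOnes, sum_filter]
  refine sum_congr rfl fun l _ => ?_
  rcases hr l with h | h <;> simp [h]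

lemma two_le_card_rowOnes {r : m} (hr : ∀ l, M r l = 0 ∨ M r l = 1) (hM : M r ≠ 0)
    {x : n → R} (hx : M *ᵥ x = 0) (hx0 : ∀ l, x l ≠ 0) : 2 ≤ #(M.rowOnes r) := by
  have hpos : 0 < #(M.rowOnes r) := by
    refine card_pos.2 (nonempty_iff_ne_empty.2 fun h => hM (funext fun l => ?_))
    rcases hr l with hl | hl
    · exact hl
    · simpa [rowOnes, hl] using congrArg (l ∈ ·) h
  by_contra! hlt
  obtain ⟨i, hi⟩ := card_eq_one.1 (by omega : #(M.rowOnes r) = 1)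
  have := mulVec_apply_eq_sum_rowOnes hr x
  rw [hx, hi, sum_singleton] at this
  exact hx0 i this.symm

lemma ncard_setOf_eq_one_eq_sum [Fintype m] :
    {p : m × n | M p.1 p.2 = 1}.ncard = ∑ r ∈ M.nonzeroRows, #(M.rowOnes r) := by
  classical
  have hzero : ∀ r ∉ M.nonzeroRows, #(M.rowOnes r) = 0 := fun r hr => by
    simp_all [nonzeroRows, rowOnes]
  rw [sum_subset (subset_univ _) fun r _ hr => hzero r hr]
  calc {p : m × n | M p.1 p.2 = 1}.ncard = #{p : m × n | M p.1 p.2 = 1} := by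
        rw [← Set.ncard_coe_finset, coe_filter_univ]
    _ = ∑ r, #(M.rowOnes r) := by
        simp only [card_filter, Fintype.sum_prod_type, rowOnes]

end Semiring

section Field

variable {K : Type*} [Field K] [Fintype n]

open Classical in
lemma rank_le_card_image_nonzeroRows [Fintype m] (M : Matrix m n K) :
    M.rank ≤ #(M.nonzeroRows.image M) := by
  rw [rank_eq_finrank_span_row]
  refine (Submodule.finrank_mono ?_).trans (finrank_span_finset_le_card _)
  refine Submodule.span_le.2 fun _ ⟨r, hr⟩ => ?_
  subst hr
  by_cases h : M r = 0
  · simp [row, h]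
  · exact Submodule.subset_span (mem_coe.2 (mem_image_of_mem _ (mem_nonzeroRows.2 h)))

lemma rank_eq_card_sub_one_iff {M : Matrix m n K} {x : n → K} (hx : M *ᵥ x = 0)
    (hx0 : x ≠ 0) :
    M.rank = Fintype.card n - 1 ↔ LinearMap.ker M.mulVecLin = K ∙ x := by
  have hnullity := LinearMap.finrank_range_add_finrank_ker M.mulVecLin
  rw [Module.finrank_fintype_fun_eq_card] at hnullity
  have hle : K ∙ x ≤ LinearMap.ker M.mulVecLin :=
    (Submodule.span_singleton_le_iff_mem _ _).2 hx
  have hone := finrank_span_singleton (K := K) hx0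
  constructor
  · intro h
    exact (Submodule.eq_of_le_of_finrank_le hle (by rw [rank] at h; omega)).symm
  · intro h
    rw [h] at hnullity
    rw [rank]; omega

lemma card_rowOnes_eq_two_of_ncard_le [Fintype m] {M : Matrix m n K}
    (h01 : ∀ r l, M r l = 0 ∨ M r l = 1)
    {x : n → K} (hx : M *ᵥ x = 0) (hx0 : ∀ l, x l ≠ 0)
    (hones : {p : m × n | M p.1 p.2 = 1}.ncard ≤ 2 * M.rank) :
    (∀ r ∈ M.nonzeroRows, #(M.rowOnes r) = 2) ∧ Set.InjOn M M.nonzeroRows ∧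
      #M.nonzeroRows = M.rank := by
  classical
  have htwo : ∀ r ∈ M.nonzeroRows, 2 ≤ #(M.rowOnes r) := fun r hr =>
    two_le_card_rowOnes (h01 r) (mem_nonzeroRows.1 hr) hx hx0
  have hsum := sum_le_sum htwo
  have hrank := M.rank_le_card_image_nonzeroRows
  have himage := card_image_le (s := M.nonzeroRows) (f := M)
  rw [ncard_setOf_eq_one_eq_sum] at hones
  rw [sum_const, smul_eq_mul] at hsum
  refine ⟨fun r hr => ((sum_eq_sum_iff_of_le htwo).1 ?_ r hr).symm, card_image_iff.1 ?_, ?_⟩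
  · rw [sum_const, smul_eq_mul]; omega
  · omega
  · omega

end Field

end Matrix

namespace IsEdgeRow

variable {m k : ℕ} {M : Matrix (Fin m) (Fin k) ℝ} {r : Fin m} {i j : Fin k}

lemma eq_one_iff (h : IsEdgeRow M r i j) (l : Fin k) : M r l = 1 ↔ l ∈ s(i, j) := by
  rw [h l, Sym2.mem_iff]
  split_ifs <;> simp_all

lemma symm (h : IsEdgeRow M r i j) : IsEdgeRow M r j i := fun l => by
  simp only [h l, or_comm]

lemma apply_eq_zero_or_one (h : IsEdgeRow M r i j) (l : Fin k) : M r l = 0 ∨ M r l = 1 := by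
  rw [h l]
  split_ifs <;> simp

lemma row_ne_zero (h : IsEdgeRow M r i j) : M r ≠ 0 := fun h0 => by
  simpa [h0] using (h.eq_one_iff i).2 (Sym2.mem_mk_left i j)

lemma rowOnes_eq (h : IsEdgeRow M r i j) : M.rowOnes r = {i, j} := by
  ext l
  simp [Matrix.rowOnes, h.eq_one_iff]

lemma card_rowOnes (h : IsEdgeRow M r i j) (hij : i ≠ j) : #(M.rowOnes r) = 2 := by
  rw [h.rowOnes_eq, card_pair hij]

lemma mulVec_apply (h : IsEdgeRow M r i j) (hij : i ≠ j) (y : Fin k → ℝ) :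
    (M *ᵥ y) r = y i + y j := by
  rw [Matrix.mulVec_apply_eq_sum_rowOnes h.apply_eq_zero_or_one, h.rowOnes_eq, sum_pair hij]

lemma sym2_eq {i' j' : Fin k} (h : IsEdgeRow M r i j) (h' : IsEdgeRow M r i' j') (hij : i ≠ j) :
    s(i, j) = s(i', j') :=
  Sym2.eq_of_ne_mem hij (Sym2.mem_mk_left i j) (Sym2.mem_mk_right i j)
    ((h'.eq_one_iff i).1 ((h.eq_one_iff i).2 (Sym2.mem_mk_left i j)))
    ((h'.eq_one_iff j).1 ((h.eq_one_iff j).2 (Sym2.mem_mk_right i j)))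

lemma of_sym2_eq {i' j' : Fin k} (h : IsEdgeRow M r i j) (he : s(i, j) = s(i', j')) :
    IsEdgeRow M r i' j' := by
  rcases Sym2.eq_iff.1 he with ⟨rfl, rfl⟩ | ⟨rfl, rfl⟩
  · exact h
  · exact h.symm

end IsEdgeRow

lemma isEdgeRow_of_rowOnes_eq {m k : ℕ} {M : Matrix (Fin m) (Fin k) ℝ} {r : Fin m} {i j : Fin k}
    (h01 : ∀ l, M r l = 0 ∨ M r l = 1) (h : M.rowOnes r = {i, j}) :
    IsEdgeRow M r i j := fun l => by
  have hl : l ∈ M.rowOnes r ↔ M r l = 1 := by simp [Matrix.rowOnes]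
  rw [h, mem_insert, mem_singleton] at hl
  split_ifs with hij
  · exact hl.1 hij
  · exact (h01 l).resolve_right (hij ∘ hl.2)

section EdgeGraph

variable {m k : ℕ} {M : Matrix (Fin m) (Fin k) ℝ} {G : SimpleGraph (Fin k)}

lemma ker_mulVecLin_eq_adjSumZero
    (hrows : ∀ r, M r ≠ 0 → ∃ i j, G.Adj i j ∧ IsEdgeRow M r i j)
    (hedges : ∀ i j, G.Adj i j → ∃ r, IsEdgeRow M r i j) :
    LinearMap.ker M.mulVecLin = G.adjSumZero ℝ := by
  ext y
  rw [LinearMap.mem_ker, mulVecLin_apply]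
  constructor
  · intro hy a b hab
    obtain ⟨r, hr⟩ := hedges a b hab
    rw [← hr.mulVec_apply hab.ne, hy, Pi.zero_apply]
  · intro hy
    funext r
    by_cases hr : M r = 0
    · simp [mulVec, hr]
    · obtain ⟨i, j, hij, hrow⟩ := hrows r hr
      rw [hrow.mulVec_apply hij.ne, Pi.zero_apply, hy i j hij]

lemma ncard_edgeSet_eq_card_nonzeroRows
    (hrows : ∀ r, M r ≠ 0 → ∃ i j, G.Adj i j ∧ IsEdgeRow M r i j)
    (hunique : ∀ i j, G.Adj i j → ∃! r, IsEdgeRow M r i j) :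
    Nat.card G.edgeSet = #M.nonzeroRows := by
  simp only [← mem_nonzeroRows] at hrows
  choose a b hadj hrow using hrows
  rw [Nat.card_coe_set_eq, ← Set.ncard_coe_finset]
  refine (Set.ncard_congr (fun r hr => s(a r hr, b r hr)) (fun r hr => hadj r hr)
    (fun r r' hr hr' he => ?_) (fun e he => ?_)).symm
  · exact (hunique _ _ (hadj r hr)).unique (hrow r hr) ((hrow r' hr').of_sym2_eq he.symm)
  · induction e using Sym2.ind with
    | h i j =>
      obtain ⟨r, hr, -⟩ := hunique i j he
      have hr0 := mem_nonzeroRows.2 hr.row_ne_zero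
      exact ⟨r, hr0, (hrow r hr0).sym2_eq hr (hadj r hr0).ne⟩

variable (M) in
def edgeGraph : SimpleGraph (Fin k) where
  Adj i j := i ≠ j ∧ ∃ r, IsEdgeRow M r i j
  symm := ⟨fun _ _ ⟨hij, r, hr⟩ => ⟨hij.symm, r, hr.symm⟩⟩
  loopless := ⟨fun _ h => h.1 rfl⟩

lemma exists_edgeGraph_adj_of_ne_zero (h01 : ∀ r l, M r l = 0 ∨ M r l = 1)
    (htwo : ∀ r ∈ M.nonzeroRows, #(M.rowOnes r) = 2) {r : Fin m} (hr : M r ≠ 0) :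
    ∃ i j, (edgeGraph M).Adj i j ∧ IsEdgeRow M r i j := by
  obtain ⟨i, j, hij, hrow⟩ := card_eq_two.1 (htwo r (mem_nonzeroRows.2 hr))
  have := isEdgeRow_of_rowOnes_eq (h01 r) hrow
  exact ⟨i, j, ⟨hij, r, this⟩, this⟩

lemma existsUnique_of_edgeGraph_adj (hinj : Set.InjOn M M.nonzeroRows) {i j : Fin k}
    (h : (edgeGraph M).Adj i j) : ∃! r, IsEdgeRow M r i j := by
  obtain ⟨-, r, hr⟩ := h
  refine ⟨r, hr, fun r' hr' => hinj (mem_nonzeroRows.2 hr'.row_ne_zero)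
    (mem_nonzeroRows.2 hr.row_ne_zero) (funext fun l => by rw [hr' l, hr l])⟩

end EdgeGraph

/-- A {0,1}-matrix with `k` columns is a minimal linear dependency with exactly `2k - 2` ones
if and only if its nonzero rows form the edge-vertex incidence matrix of a tree on `k`
vertices. -/
theorem stmt4 {m k : ℕ} (hk : 1 ≤ k) (M : Matrix (Fin m) (Fin k) ℝ)
    (h01 : ∀ i j, M i j = 0 ∨ M i j = 1) :
    ((M.rank = k - 1 ∧ ∃ x : Fin k → ℝ, M.mulVec x = 0 ∧ ∀ j, x j ≠ 0) ∧
      Set.ncard {p : Fin m × Fin k | M p.1 p.2 = 1} = 2 * k - 2)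
    ↔ ∃ G : SimpleGraph (Fin k), G.IsTree ∧
        (∀ r : Fin m, (∃ l, M r l ≠ 0) → ∃ i j, G.Adj i j ∧ IsEdgeRow M r i j) ∧
        (∀ i j, G.Adj i j → ∃! r, IsEdgeRow M r i j) := by
  simp only [← Function.ne_iff]
  constructor
  · rintro ⟨⟨hrank, x, hx, hx0⟩, hones⟩
    have : Nonempty (Fin k) := ⟨⟨0, hk⟩⟩
    obtain ⟨htwo, hinj, hcard⟩ := card_rowOnes_eq_two_of_ncard_le h01 hx hx0 (by omega)
    have hrows (r) := exists_edgeGraph_adj_of_ne_zero (r := r) h01 htwo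
    have hunique (i j) := existsUnique_of_edgeGraph_adj (i := i) (j := j) hinj
    have hker := ker_mulVecLin_eq_adjSumZero hrows fun i j h => (hunique i j h).exists
    have hspan := (rank_eq_card_sub_one_iff hx fun h => hx0 ⟨0, hk⟩ (congrFun h _)).1
      (by simpa using hrank)
    have hconn :=
      (connected_iff_adjSumZero_eq_span (hker ▸ LinearMap.mem_ker.2 hx) hx0).2 (hker ▸ hspan)
    refine ⟨edgeGraph M, isTree_iff_connected_and_card.2 ⟨hconn, ?_⟩, hrows, hunique⟩
    rw [ncard_edgeSet_eq_card_nonzeroRows hrows hunique, Nat.card_fin]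
    omega
  · rintro ⟨G, hG, hrows, hunique⟩
    have := hG.connected.nonempty
    have hker := ker_mulVecLin_eq_adjSumZero hrows fun i j h => (hunique i j h).exists
    obtain ⟨x, hxG, hx0⟩ := hG.colorable_two.exists_mem_adjSumZero (K := ℝ)
    have hx : M *ᵥ x = 0 := LinearMap.mem_ker.1 (hker ▸ hxG)
    have hedges := (isTree_iff_connected_and_card.1 hG).2
    rw [ncard_edgeSet_eq_card_nonzeroRows hrows hunique, Nat.card_fin] at hedges
    have htwo : ∀ r ∈ M.nonzeroRows, #(M.rowOnes r) = 2 := fun r hr =>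
      have ⟨_, _, hij, hrow⟩ := hrows r (mem_nonzeroRows.1 hr)
      hrow.card_rowOnes hij.ne
    refine ⟨⟨?_, x, hx, hx0⟩, ?_⟩
    · have := (rank_eq_card_sub_one_iff hx fun h => hx0 (Classical.arbitrary _) (congrFun h _)).2
        (hker.trans ((connected_iff_adjSumZero_eq_span hxG hx0).1 hG.connected))
      simpa using this
    · rw [ncard_setOf_eq_one_eq_sum, sum_const_nat htwo]
      omega
end

section
/- Let A ∈ ℝ^{n×m} and let A' ∈ ℝ^{(n−1)×(m−1)} be obtained from A by deleting a column that contains exactly one nonzero entry (equal to 1) together with the row containing that entry. Then corank(A) = corank(A'), where corank of a matrix with m columns is m minus its rank. Moreover, the union of supports of vectors in the kernel of A', viewed as a subset of the remaining column indices, is contained in the union of supports of vectors in the kernel of A. -/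
/-!
Column `j0` of `A` is the unit vector at row `i0`, so `A x = 0` holds exactly when the restriction
of `x` to the other columns lies in the kernel of the reduced matrix `A'` and
`x j0 = -∑_{k ≠ j0} A i0 k x k` (row `i0`). Restriction is therefore a linear isomorphism
`ker A ≃ ker A'`, whose inverse extends each kernel vector of `A'` without changing its entries;
by rank–nullity the coranks are the dimensions of these kernels.
-/

namespace Matrix

variable {ι κ K : Type*} [Fintype κ] [Field K]

theorem card_sub_rank_eq_finrank_ker (A : Matrix ι κ K) :
    Fintype.card κ - A.rank = Module.finrank K (LinearMap.ker A.mulVecLin) := by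
  rw [← Module.finrank_pi K, ← LinearMap.finrank_range_add_finrank_ker A.mulVecLin, rank,
    Nat.add_sub_cancel_left]

variable [DecidableEq κ]

theorem mulVec_apply_eq_add_sum_ne (A : Matrix ι κ K) (j0 : κ) (x : κ → K) (i : ι) :
    (A *ᵥ x) i = A i j0 * x j0 + ∑ k : {j // j ≠ j0}, A i k * x k :=
  Fintype.sum_eq_add_sum_subtype_ne _ j0

def deleteRowCol (A : Matrix ι κ K) (i0 : ι) (j0 : κ) : Matrix {i // i ≠ i0} {j // j ≠ j0} K :=
  A.submatrix (↑) (↑)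

/-- When `A i0 j0 = 1`, this is the extension of `x'` annihilated by row `i0` of `A`. -/
def leafExtend (A : Matrix ι κ K) (i0 : ι) {j0 : κ} (x' : {j // j ≠ j0} → K) : κ → K :=
  fun j => if h : j = j0 then -∑ k : {j // j ≠ j0}, A i0 k * x' k else x' ⟨j, h⟩

variable {A : Matrix ι κ K} {i0 : ι} {j0 : κ}

@[simp]
theorem leafExtend_val (x' : {j // j ≠ j0} → K) (k : {j // j ≠ j0}) :
    A.leafExtend i0 x' k = x' k :=
  dif_neg k.2

theorem mulVec_deleteRowCol_apply (h0 : ∀ i, i ≠ i0 → A i j0 = 0) (x : κ → K)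
    (i : {i // i ≠ i0}) :
    (A.deleteRowCol i0 j0 *ᵥ fun k => x k) i = (A *ᵥ x) i := by
  rw [mulVec_apply_eq_add_sum_ne A j0, h0 i i.2, zero_mul, zero_add]
  rfl

theorem mulVec_leafExtend_eq_zero (h1 : A i0 j0 = 1) (h0 : ∀ i, i ≠ i0 → A i j0 = 0)
    {x' : {j // j ≠ j0} → K} (hx' : A.deleteRowCol i0 j0 *ᵥ x' = 0) :
    A *ᵥ A.leafExtend i0 x' = 0 := by
  ext i
  rw [mulVec_apply_eq_add_sum_ne A j0]
  simp only [leafExtend_val]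
  by_cases hi : i = i0
  · subst hi
    simp [leafExtend, h1]
  · rw [h0 i hi, zero_mul, zero_add]
    exact congrFun hx' ⟨i, hi⟩

theorem eq_leafExtend_of_mulVec_eq_zero (h1 : A i0 j0 = 1) {x : κ → K} (hx : A *ᵥ x = 0) :
    x = A.leafExtend i0 fun k : {j // j ≠ j0} => x k := by
  ext j
  by_cases hj : j = j0
  · subst hj
    have hrow := congrFun hx i0
    rw [mulVec_apply_eq_add_sum_ne A j, h1, one_mul] at hrow
    simp [leafExtend, eq_neg_of_add_eq_zero_left hrow]
  · exact (leafExtend_val (fun k => x k) ⟨j, hj⟩).symm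

noncomputable def kerEquivKerDeleteRowCol (h1 : A i0 j0 = 1) (h0 : ∀ i, i ≠ i0 → A i j0 = 0) :
    LinearMap.ker A.mulVecLin ≃ₗ[K] LinearMap.ker (A.deleteRowCol i0 j0).mulVecLin :=
  LinearEquiv.ofBijective
    ((LinearMap.funLeft K K Subtype.val).restrict fun x hx => by
      rw [LinearMap.mem_ker, mulVecLin_apply] at hx ⊢
      exact funext fun i => (mulVec_deleteRowCol_apply h0 x i).trans (congrFun hx i))
    ⟨fun x y hxy => Subtype.ext <| by
      rw [eq_leafExtend_of_mulVec_eq_zero h1 x.2, eq_leafExtend_of_mulVec_eq_zero h1 y.2]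
      exact congrArg (A.leafExtend i0) (congrArg Subtype.val hxy),
    fun x' => ⟨⟨A.leafExtend i0 x'.1, mulVec_leafExtend_eq_zero h1 h0 x'.2⟩,
      Subtype.ext <| funext fun k => leafExtend_val _ k⟩⟩

end Matrix

/-- One-sided leaf removal: deleting from `A` a column `j₀` containing a single nonzero entry
(equal to `1`, at row `i₀`) together with row `i₀` preserves the corank, and the union of
supports of kernel vectors of the reduced matrix is contained in that of `A`. -/
theorem stmt7 {n m : ℕ} (A : Matrix (Fin n) (Fin m) ℝ) (i0 : Fin n) (j0 : Fin m)
    (h1 : A i0 j0 = 1) (h0 : ∀ i, i ≠ i0 → A i j0 = 0) :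
    (m - A.rank =
      (m - 1) - (A.submatrix (Subtype.val : {i : Fin n // i ≠ i0} → Fin n)
        (Subtype.val : {j : Fin m // j ≠ j0} → Fin m)).rank) ∧
    ∀ x' : {j : Fin m // j ≠ j0} → ℝ,
      (A.submatrix (Subtype.val : {i : Fin n // i ≠ i0} → Fin n)
        (Subtype.val : {j : Fin m // j ≠ j0} → Fin m)).mulVec x' = 0 →
      ∀ j : {j : Fin m // j ≠ j0}, x' j ≠ 0 →
        ∃ x : Fin m → ℝ, A.mulVec x = 0 ∧ x j.val ≠ 0 := by
  refine ⟨?_, fun x' hx' j hj => ⟨A.leafExtend i0 x', Matrix.mulVec_leafExtend_eq_zero h1 h0 hx',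
    by rwa [Matrix.leafExtend_val]⟩⟩
  have hcard : Fintype.card {j : Fin m // j ≠ j0} = m - 1 := by
    rw [Fintype.card_subtype_compl, Fintype.card_fin, Fintype.card_subtype_eq]
  have hcorank := Matrix.card_sub_rank_eq_finrank_ker (A.deleteRowCol i0 j0)
  rw [hcard, ← (Matrix.kerEquivKerDeleteRowCol h1 h0).finrank_eq,
    ← Matrix.card_sub_rank_eq_finrank_ker, Fintype.card_fin] at hcorank
  exact hcorank.symm
end

section
/- Let A ∈ ℝ^{n×n} be the adjacency matrix of a graph G, let v be a vertex of degree one in G with unique neighbor w, and let A' be the adjacency matrix of the graph obtained from G by deleting both v and w. Then corank(A) = corank(A'). Moreover, the set of vertices appearing in the support of some kernel vector of A' is contained in the set of vertices appearing in the support of some kernel vector of A. -/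
/-!
Restriction to the remaining vertices is an isomorphism from `ker A` onto `ker A'`. Row `v`
of `A x = 0` reads `x w = 0`, and `A u v = 0` for every `u ≠ w`, so restricting a kernel vector
of `A` gives one of `A'`; row `w` then reads `x v + ∑ₖ A w k x k = 0`, so the restriction is
injective. Conversely a kernel vector `x'` of `A'` extends to one of `A` by `x w = 0` and
`x v = -∑ₖ A w k x' k`. Equal nullities give equal coranks, and the extension keeps the
support of `x'`.
-/

open Matrix Module

theorem Fintype.sum_eq_add_add_sum_subtype_ne_and_ne {α M : Type*} [Fintype α] [DecidableEq α]
    [AddCommMonoid M] (f : α → M) {a b : α} (hab : a ≠ b) :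
    ∑ i, f i = f a + f b + ∑ i : {i // i ≠ a ∧ i ≠ b}, f i := by
  rw [← Finset.sum_pair hab, ← Finset.sum_subtype (Finset.univ \ {a, b}) (by simp [not_or]),
    add_comm, Finset.sum_sdiff (Finset.subset_univ _)]

theorem Fintype.card_subtype_ne_and_ne {α : Type*} [Fintype α] [DecidableEq α] {a b : α}
    (hab : a ≠ b) : Fintype.card {i // i ≠ a ∧ i ≠ b} = Fintype.card α - 2 := by
  have := Fintype.sum_eq_add_add_sum_subtype_ne_and_ne (fun _ => 1) hab
  simp only [Finset.sum_const, Finset.card_univ, smul_eq_mul, mul_one] at this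
  omega

theorem Matrix.card_sub_rank_eq_finrank_ker_s8 {m n K : Type*} [Fintype n] [Field K]
    (A : Matrix m n K) : Fintype.card n - A.rank = finrank K (LinearMap.ker A.mulVecLin) := by
  rw [Matrix.rank, ← finrank_fintype_fun_eq_card K,
    ← LinearMap.finrank_range_add_finrank_ker A.mulVecLin]
  omega

namespace SimpleGraph

variable {V R : Type*} [Fintype V] {G : SimpleGraph V} [DecidableRel G.Adj] {v w : V}

local notation "V'" => {u // u ≠ v ∧ u ≠ w}

variable (R G v w) in
abbrev adjMatrixDeletePair [Zero R] [One R] : Matrix V' V' R :=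
  (G.adjMatrix R).submatrix Subtype.val Subtype.val

theorem neighborFinset_eq_singleton_of_degree_eq_one (hdeg : G.degree v = 1) (hadj : G.Adj v w) :
    G.neighborFinset v = {w} := by
  obtain ⟨u, hu⟩ := Finset.card_eq_one.mp hdeg
  rwa [Finset.eq_singleton_iff_unique_mem.mp hu |>.2 w ((G.mem_neighborFinset v w).2 hadj)]

theorem adj_of_neighborFinset_eq_singleton (hv : G.neighborFinset v = {w}) : G.Adj v w :=
  (G.mem_neighborFinset v w).1 <| hv ▸ Finset.mem_singleton_self w

section Semiring

variable [NonAssocSemiring R]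

theorem adjMatrix_apply_leaf_eq_zero (hv : G.neighborFinset v = {w}) {u : V} (hu : u ≠ w) :
    G.adjMatrix R u v = 0 := by
  rw [adjMatrix_apply, if_neg]
  rwa [G.adj_comm, ← G.mem_neighborFinset, hv, Finset.mem_singleton]

theorem adjMatrix_mulVec_apply_leaf (hv : G.neighborFinset v = {w}) (x : V → R) :
    (G.adjMatrix R *ᵥ x) v = x w := by
  rw [adjMatrix_mulVec_apply, hv, Finset.sum_singleton]

theorem adjMatrix_mulVec_apply_neighbor [DecidableEq V] (hv : G.neighborFinset v = {w})
    (x : V → R) : (G.adjMatrix R *ᵥ x) w = x v + ∑ u : V', G.adjMatrix R w u * x u := by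
  have hadj := adj_of_neighborFinset_eq_singleton hv
  rw [mulVec, dotProduct, Fintype.sum_eq_add_add_sum_subtype_ne_and_ne _ hadj.ne,
    adjMatrix_apply, adjMatrix_apply, if_pos hadj.symm, if_neg (G.irrefl (v := w)), one_mul,
    zero_mul, add_zero]

theorem adjMatrix_mulVec_apply_coe [DecidableEq V] (hv : G.neighborFinset v = {w})
    (x : V → R) (u : V') :
    (G.adjMatrix R *ᵥ x) u =
      (G.adjMatrixDeletePair R v w *ᵥ fun u' : V' => x u') u + G.adjMatrix R u w * x w := by
  rw [mulVec, dotProduct, Fintype.sum_eq_add_add_sum_subtype_ne_and_ne _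
    (adj_of_neighborFinset_eq_singleton hv).ne, adjMatrix_apply_leaf_eq_zero hv u.2.2, zero_mul,
    zero_add, add_comm]
  rfl

theorem adjMatrixDeletePair_mulVec_restrict_eq_zero [DecidableEq V]
    (hv : G.neighborFinset v = {w}) {x : V → R} (hx : G.adjMatrix R *ᵥ x = 0) :
    G.adjMatrixDeletePair R v w *ᵥ (fun u : V' => x u) = 0 := by
  have hxw : x w = 0 := by rw [← adjMatrix_mulVec_apply_leaf hv x, hx, Pi.zero_apply]
  funext u
  simpa only [hx, hxw, Pi.zero_apply, mul_zero, add_zero] using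
    (adjMatrix_mulVec_apply_coe hv x u).symm

theorem eq_zero_of_mulVec_eq_zero_of_forall_eq_zero [DecidableEq V]
    (hv : G.neighborFinset v = {w}) {x : V → R} (hx : G.adjMatrix R *ᵥ x = 0)
    (hx' : ∀ u : V', x u = 0) : x = 0 := by
  have hxw : x w = 0 := by rw [← adjMatrix_mulVec_apply_leaf hv x, hx, Pi.zero_apply]
  have hxv : x v = 0 := by
    simpa only [hx, hx', Pi.zero_apply, mul_zero, Finset.sum_const_zero, add_zero] using
      (adjMatrix_mulVec_apply_neighbor hv x).symm
  funext u
  by_cases huv : u = v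
  · rw [huv, hxv, Pi.zero_apply]
  by_cases huw : u = w
  · rw [huw, hxw, Pi.zero_apply]
  · exact hx' ⟨u, huv, huw⟩

end Semiring

section Ring

variable [NonAssocRing R] [DecidableEq V]

variable (G R v w) in
def leafExtension (x' : V' → R) : V → R := fun u =>
  if h : u ≠ v ∧ u ≠ w then x' ⟨u, h⟩
  else if u = v then -∑ k : V', G.adjMatrix R w k * x' k else 0

@[simp]
theorem leafExtension_apply_coe (x' : V' → R) (u : V') : G.leafExtension R v w x' u = x' u :=
  dif_pos u.2

theorem leafExtension_apply_leaf (x' : V' → R) :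
    G.leafExtension R v w x' v = -∑ k : V', G.adjMatrix R w k * x' k := by
  simp [leafExtension]

theorem leafExtension_apply_neighbor (hvw : v ≠ w) (x' : V' → R) :
    G.leafExtension R v w x' w = 0 := by
  simp [leafExtension, hvw.symm]

theorem adjMatrix_mulVec_leafExtension (hv : G.neighborFinset v = {w}) {x' : V' → R}
    (hx' : G.adjMatrixDeletePair R v w *ᵥ x' = 0) :
    G.adjMatrix R *ᵥ G.leafExtension R v w x' = 0 := by
  have hvw := (adj_of_neighborFinset_eq_singleton hv).ne
  funext u
  by_cases huv : u = v
  · rw [huv, adjMatrix_mulVec_apply_leaf hv, leafExtension_apply_neighbor hvw, Pi.zero_apply]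
  by_cases huw : u = w
  · simp only [huw, adjMatrix_mulVec_apply_neighbor hv, leafExtension_apply_leaf,
      leafExtension_apply_coe, neg_add_cancel, Pi.zero_apply]
  · have hrestrict : (fun u' : V' => G.leafExtension R v w x' u') = x' :=
      funext (leafExtension_apply_coe x')
    rw [show u = ((⟨u, huv, huw⟩ : V') : V) from rfl, adjMatrix_mulVec_apply_coe hv, hrestrict,
      hx', leafExtension_apply_neighbor hvw, Pi.zero_apply, mul_zero, add_zero, Pi.zero_apply]

end Ring

theorem finrank_ker_adjMatrix_eq_finrank_ker_adjMatrixDeletePair [CommRing R] [DecidableEq V]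
    (hv : G.neighborFinset v = {w}) :
    finrank R (LinearMap.ker (G.adjMatrix R).mulVecLin) =
      finrank R (LinearMap.ker (G.adjMatrixDeletePair R v w).mulVecLin) := by
  let restrict : LinearMap.ker (G.adjMatrix R).mulVecLin →ₗ[R]
      LinearMap.ker (G.adjMatrixDeletePair R v w).mulVecLin :=
    (LinearMap.funLeft R R Subtype.val).restrict fun _ hx =>
      adjMatrixDeletePair_mulVec_restrict_eq_zero hv hx
  refine (LinearEquiv.ofBijective restrict ⟨?_, ?_⟩).finrank_eq
  · refine (injective_iff_map_eq_zero restrict).2 fun ⟨x, hx⟩ hx0 => ?_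
    exact Subtype.ext <| eq_zero_of_mulVec_eq_zero_of_forall_eq_zero hv hx
      fun u => congrFun (congrArg Subtype.val hx0) u
  · exact fun ⟨x', hx'⟩ =>
      ⟨⟨G.leafExtension R v w x', adjMatrix_mulVec_leafExtension hv hx'⟩,
      Subtype.ext <| funext <| leafExtension_apply_coe x'⟩

theorem card_sub_rank_adjMatrix_eq_of_neighborFinset_eq_singleton {K : Type*} [Field K]
    [DecidableEq V] (hv : G.neighborFinset v = {w}) :
    Fintype.card V - (G.adjMatrix K).rank =
      (Fintype.card V - 2) - (G.adjMatrixDeletePair K v w).rank := by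
  rw [← Fintype.card_subtype_ne_and_ne (adj_of_neighborFinset_eq_singleton hv).ne,
    card_sub_rank_eq_finrank_ker_s8, card_sub_rank_eq_finrank_ker_s8,
    finrank_ker_adjMatrix_eq_finrank_ker_adjMatrixDeletePair hv]

end SimpleGraph

open SimpleGraph in
/-- Leaf removal: if `v` has degree one in `G` with unique neighbor `w`, then deleting `v` and
`w` preserves the corank of the adjacency matrix, and the set of vertices supporting kernel
vectors of the reduced adjacency matrix is contained in that of `A`. -/
theorem stmt8 {n : ℕ} (G : SimpleGraph (Fin n)) [DecidableRel G.Adj]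
    (v w : Fin n) (hdeg : G.degree v = 1) (hadj : G.Adj v w) :
    (n - (G.adjMatrix ℝ).rank =
      (n - 2) - ((G.adjMatrix ℝ).submatrix
        (Subtype.val : {u : Fin n // u ≠ v ∧ u ≠ w} → Fin n)
        (Subtype.val : {u : Fin n // u ≠ v ∧ u ≠ w} → Fin n)).rank) ∧
    ∀ x' : {u : Fin n // u ≠ v ∧ u ≠ w} → ℝ,
      ((G.adjMatrix ℝ).submatrix
        (Subtype.val : {u : Fin n // u ≠ v ∧ u ≠ w} → Fin n)
        (Subtype.val : {u : Fin n // u ≠ v ∧ u ≠ w} → Fin n)).mulVec x' = 0 →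
      ∀ u : {u : Fin n // u ≠ v ∧ u ≠ w}, x' u ≠ 0 →
        ∃ x : Fin n → ℝ, (G.adjMatrix ℝ).mulVec x = 0 ∧ x u.val ≠ 0 := by
  have hv := neighborFinset_eq_singleton_of_degree_eq_one hdeg hadj
  refine ⟨?_, fun x' hx' u hu => ?_⟩
  · simpa using card_sub_rank_adjMatrix_eq_of_neighborFinset_eq_singleton (K := ℝ) hv
  · exact ⟨G.leafExtension ℝ v w x', adjMatrix_mulVec_leafExtension hv hx',
      by rwa [leafExtension_apply_coe]⟩
end

section
/- Let A be an m × n real matrix with columns A_1, …, A_n, and for each i let H_i be the span of the columns {A_j : j ≠ i}. Let S = {i : A_i ∈ H_i}. Then there exists a vector y with supp(y) = S and Ay = 0. -/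
/-!
A vector `y` with `A y = 0` is a linear dependence among the columns, and a dependence with
`y i ≠ 0` exists iff `A_i ∈ H_i`. So `S` is the union of the supports of the vectors of `ker A`.
Since `ℝ` is infinite, `ker A` is not the union of its finitely many proper subspaces
`{y | y i = 0}`, `i ∈ S`, so one kernel vector is nonzero at every index of `S`.
-/

open Finset Matrix

theorem Submodule.exists_mem_forall_apply_ne_zero_iff {K ι : Type*} [Field K] [Infinite K]
    [Finite ι] (W : Submodule K (ι → K)) :
    ∃ w ∈ W, ∀ i, w i ≠ 0 ↔ ∃ x ∈ W, x i ≠ 0 := by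
  let T := {i // ∃ x ∈ W, x i ≠ 0}
  let p : T → Submodule K W := fun i => LinearMap.ker ((LinearMap.proj i.1).comp W.subtype)
  have hp : ∀ i, p i ≠ ⊤ := by
    rintro ⟨i, x, hx, hxi⟩ htop
    have hxp : (⟨x, hx⟩ : W) ∈ p ⟨i, x, hx, hxi⟩ := htop ▸ Submodule.mem_top
    exact hxi hxp
  have hcover : ⋃ i, (p i : Set W) ≠ Set.univ := fun h =>
    let ⟨i, hi⟩ := Subspace.exists_eq_top_of_iUnion_eq_univ h
    hp i hi
  obtain ⟨⟨w, hw⟩, -, hwp⟩ := Set.exists_of_ssubset (Set.ssubset_univ_iff.2 hcover)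
  simp only [Set.mem_iUnion, not_exists] at hwp
  exact ⟨w, hw, fun i => ⟨fun hwi => ⟨w, hw, hwi⟩, fun hi => hwp ⟨i, hi⟩⟩⟩

theorem Fintype.mem_span_image_ne_iff_exists_sum_eq_zero {K M ι : Type*} [Field K]
    [AddCommGroup M] [Module K M] [Fintype ι] [DecidableEq ι] (v : ι → M) (i : ι) :
    v i ∈ Submodule.span K (v '' {j | j ≠ i}) ↔ ∃ c : ι → K, ∑ j, c j • v j = 0 ∧ c i ≠ 0 := by
  constructor
  · rw [Finsupp.mem_span_image_iff_linearCombination]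
    rintro ⟨l, hl, hlv⟩
    have hli : l i = 0 := Finsupp.notMem_support_iff.1 fun h => hl h rfl
    refine ⟨⇑l - Pi.single i (1 : K), ?_, by simp [hli]⟩
    simp only [Pi.sub_apply, sub_smul, sum_sub_distrib, Pi.single_apply, ite_smul, one_smul,
      zero_smul, sum_ite_eq', sub_eq_zero]
    rw [← hlv, Finsupp.linearCombination_apply, Finsupp.sum_fintype _ _ (by simp)]
  · rintro ⟨c, hc, hci⟩
    rw [← add_sum_erase _ _ (mem_univ i), add_eq_zero_iff_eq_neg] at hc
    rw [← Submodule.smul_mem_iff _ hci, hc]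
    exact neg_mem (sum_mem fun j hj =>
      Submodule.smul_mem _ _ (Submodule.subset_span ⟨j, ne_of_mem_erase hj, rfl⟩))

theorem Matrix.col_mem_span_other_cols_iff {K m n : Type*} [Field K] [Fintype n] [DecidableEq n]
    (A : Matrix m n K) (i : n) :
    (fun r => A r i) ∈ Submodule.span K {c : m → K | ∃ j, j ≠ i ∧ c = fun r => A r j} ↔
      ∃ x, A *ᵥ x = 0 ∧ x i ≠ 0 := by
  have hcols : {c : m → K | ∃ j, j ≠ i ∧ c = fun r => A r j} = Aᵀ '' {j | j ≠ i} := by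
    ext c
    exact exists_congr fun j => and_congr_right fun _ => eq_comm
  simp only [hcols, mulVec_eq_sum, op_smul_eq_smul]
  exact Fintype.mem_span_image_ne_iff_exists_sum_eq_zero Aᵀ i

/-- Let `S` be the set of indices `i` such that column `A_i` lies in the span of the remaining
columns. Then there is a vector `y` with support exactly `S` and `A y = 0`. -/
theorem stmt10 {m n : ℕ} (A : Matrix (Fin m) (Fin n) ℝ) :
    ∃ y : Fin n → ℝ, A.mulVec y = 0 ∧
      ∀ i, y i ≠ 0 ↔
        (fun r => A r i) ∈
          Submodule.span ℝ {c : Fin m → ℝ | ∃ j, j ≠ i ∧ c = fun r => A r j} := by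
  obtain ⟨y, hy, hsupp⟩ := (LinearMap.ker A.mulVecLin).exists_mem_forall_apply_ne_zero_iff
  exact ⟨y, hy, fun i => (hsupp i).trans (A.col_mem_span_other_cols_iff i).symm⟩
end

section
/- Let A be an m × n real matrix with columns A_1, …, A_n, and for each i let H_i be the span of the other columns {A_j : j ≠ i}. Then the standard basis vector e_i ∈ ℝ^n lies in the row span of A (i.e., e_i ∈ Span(A^T)) if and only if A_i ∉ H_i. -/
/-! Writing `e_i = yᵀ A`, the row vector `y` is a linear functional that vanishes on every column
`A_j` with `j ≠ i` and takes the value `1` on `A_i`. Over a field such a functional exists exactly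
when `A_i` lies outside the span of the other columns. -/

open Module Submodule Matrix

theorem Pi.eq_single_iff {ι M : Type*} [DecidableEq ι] [Zero M] {f : ι → M} {i : ι} {a : M} :
    f = Pi.single i a ↔ f i = a ∧ ∀ j ≠ i, f j = 0 := by
  constructor
  · rintro rfl
    exact ⟨by simp, fun j hj => by simp [hj]⟩
  · rintro ⟨hi, hj⟩
    ext j
    rcases eq_or_ne j i with rfl | hji
    · simp [hi]
    · simp [hj j hji, hji]

theorem Subspace.notMem_iff_exists_dual_eq_one {K V : Type*} [Field K] [AddCommGroup V]
    [Module K V] (W : Subspace K V) (x : V) :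
    x ∉ W ↔ ∃ f ∈ W.dualAnnihilator, f x = 1 := by
  rw [← Subspace.forall_mem_dualAnnihilator_apply_eq_zero_iff]
  push Not
  constructor
  · rintro ⟨f, hf, hfx⟩
    exact ⟨(f x)⁻¹ • f, W.dualAnnihilator.smul_mem _ hf, by simp [hfx]⟩
  · rintro ⟨f, hf, hfx⟩
    exact ⟨f, hf, by simp [hfx]⟩

theorem Matrix.mem_span_range_iff_exists_vecMul {R m n : Type*} [CommSemiring R] [Fintype m]
    (A : Matrix m n R) (v : n → R) :
    v ∈ span R (Set.range A) ↔ ∃ y, y ᵥ* A = v := by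
  rw [show Set.range A = Set.range A.row from rfl, ← range_vecMulLinear]
  rfl

theorem Matrix.single_mem_span_range_iff_col_notMem_span {K m n : Type*} [Field K] [Fintype m]
    [DecidableEq m] [DecidableEq n] (A : Matrix m n K) (i : n) :
    Pi.single i 1 ∈ span K (Set.range A) ↔ A.col i ∉ span K (A.col '' {j | j ≠ i}) := by
  rw [mem_span_range_iff_exists_vecMul, Subspace.notMem_iff_exists_dual_eq_one,
    (dotProductEquiv K m).surjective.exists]
  refine exists_congr fun y => ?_
  rw [Pi.eq_single_iff, ← SetLike.mem_coe, coe_dualAnnihilator_span, and_comm]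
  simp [Set.subset_def, vecMul_apply]

/-- The standard basis vector `e_i` lies in the row span of `A` if and only if column `A_i`
does not lie in the span of the remaining columns. -/
theorem stmt11 {m n : ℕ} (A : Matrix (Fin m) (Fin n) ℝ) (i : Fin n) :
    (Pi.single i 1 : Fin n → ℝ) ∈ Submodule.span ℝ (Set.range A) ↔
      (fun r => A r i) ∉
        Submodule.span ℝ {c : Fin m → ℝ | ∃ j, j ≠ i ∧ c = fun r => A r j} := by
  have hcols : {c : Fin m → ℝ | ∃ j, j ≠ i ∧ c = fun r => A r j} = A.col '' {j | j ≠ i} := by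
    ext c
    simp [eq_comm, col_apply']
  rw [hcols]
  exact A.single_mem_span_range_iff_col_notMem_span i
end

section
/- Let A ∈ ℝ^{m×n}, let D = ⋃_{x : Ax = 0} supp(x) be the set of column indices involved in some kernel vector, and let i ∈ [n] \ D. Then e_i lies in the row span of A. Consequently, the indicator vector of [n] \ D lies in the row span of A, and hence min_w |A^T w − 𝟙|_2^2 ≤ |D| (where 𝟙 ∈ ℝ^n is the all-ones vector). -/
/-!
The row span of `A` is the annihilator of `ker A` (the range of the dual map is the annihilator
of the kernel), so `e_i` lies in it exactly when every kernel vector vanishes at `i`. Summing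
these `e_i` over `i ∉ D` writes the indicator of the complement of `D` as `Aᵀ w`, and then
`Aᵀ w - 𝟙` is `-1` on `D` and `0` off it.
-/

open Matrix

namespace Matrix

variable {K m n : Type*} [Field K] [Fintype m] [Fintype n]

theorem mem_span_range_iff_forall_mulVec_eq_zero (A : Matrix m n K) (v : n → K) :
    v ∈ Submodule.span K (Set.range A) ↔ ∀ x, A *ᵥ x = 0 → v ⬝ᵥ x = 0 := by
  classical
  have hdual : ∀ w : m → K, A.mulVecLin.dualMap (dotProductEquiv K m w) =
      dotProductEquiv K n (w ᵥ* A) := fun w =>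
    LinearMap.ext fun x => dotProduct_mulVec w A x
  have hrange : v ∈ LinearMap.range A.vecMulLinear ↔
      dotProductEquiv K n v ∈ LinearMap.range A.mulVecLin.dualMap := by
    simp only [LinearMap.mem_range, vecMulLinear_apply,
      (dotProductEquiv K m).surjective.exists, hdual, (dotProductEquiv K n).injective.eq_iff]
  change v ∈ Submodule.span K (Set.range A.row) ↔ _
  rw [← range_vecMulLinear, hrange, LinearMap.range_dualMap_eq_dualAnnihilator_ker,
    Submodule.mem_dualAnnihilator]
  rfl

theorem single_mem_span_range_of_forall_mulVec_eq_zero [DecidableEq n] (A : Matrix m n K)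
    {i : n} (hi : ∀ x, A *ᵥ x = 0 → x i = 0) :
    Pi.single i 1 ∈ Submodule.span K (Set.range A) :=
  (A.mem_span_range_iff_forall_mulVec_eq_zero _).2 fun x hx => by
    rw [single_one_dotProduct, hi x hx]

omit [Fintype n] in
theorem exists_transpose_mulVec_eq_of_mem_span_range (A : Matrix m n K) {v : n → K}
    (hv : v ∈ Submodule.span K (Set.range A)) : ∃ w, Aᵀ *ᵥ w = v := by
  rw [show Set.range A = Set.range A.row from rfl, ← range_vecMulLinear] at hv
  obtain ⟨w, hw⟩ := hv
  exact ⟨w, (mulVec_transpose A w).trans hw⟩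

end Matrix

theorem Submodule.mem_of_forall_single_mem {R ι : Type*} [Semiring R] [Fintype ι]
    [DecidableEq ι] {p : Submodule R (ι → R)} {v : ι → R}
    (h : ∀ i, v i ≠ 0 → Pi.single i 1 ∈ p) : v ∈ p := by
  rw [pi_eq_sum_univ' v]
  refine p.sum_mem fun i _ => ?_
  by_cases hvi : v i = 0
  · simp [hvi]
  · exact p.smul_mem _ (h i hvi)

theorem sum_sq_ite_zero_one_sub_one {ι : Type*} [Fintype ι] (P : ι → Prop) [DecidablePred P] :
    ∑ j, ((if P j then (0 : ℝ) else 1) - 1) ^ 2 = ({j | P j}.ncard : ℝ) := by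
  rw [Set.ncard_eq_toFinset_card', Set.toFinset_ofPred, Finset.natCast_card_filter]
  refine Finset.sum_congr rfl fun j _ => ?_
  split_ifs <;> norm_num

open Classical in
/-- Let `D` be the set of column indices involved in some kernel vector of `A`. Then for every
`i ∉ D` the basis vector `e_i` lies in the row span of `A`; the indicator vector of the
complement of `D` lies in the row span of `A`; and consequently
`min_w |Aᵀ w - 𝟙|² ≤ |D|`. -/
theorem stmt12 {m n : ℕ} (A : Matrix (Fin m) (Fin n) ℝ) :
    (∀ i : Fin n, i ∉ {j : Fin n | ∃ x, A.mulVec x = 0 ∧ x j ≠ 0} →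
        (Pi.single i 1 : Fin n → ℝ) ∈ Submodule.span ℝ (Set.range A)) ∧
    ((fun j : Fin n => if ∃ x, A.mulVec x = 0 ∧ x j ≠ 0 then (0 : ℝ) else 1) ∈
        Submodule.span ℝ (Set.range A)) ∧
    ∃ w : Fin m → ℝ, ∑ j, (A.transpose.mulVec w j - 1) ^ 2 ≤
        (Set.ncard {j : Fin n | ∃ x, A.mulVec x = 0 ∧ x j ≠ 0} : ℝ) := by
  have hsingle : ∀ i : Fin n, i ∉ {j : Fin n | ∃ x, A.mulVec x = 0 ∧ x j ≠ 0} →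
      (Pi.single i 1 : Fin n → ℝ) ∈ Submodule.span ℝ (Set.range A) := fun i hi =>
    A.single_mem_span_range_of_forall_mulVec_eq_zero fun x hx =>
      by_contra fun hxi => hi ⟨x, hx, hxi⟩
  have hind : (fun j : Fin n => if ∃ x, A.mulVec x = 0 ∧ x j ≠ 0 then (0 : ℝ) else 1) ∈
      Submodule.span ℝ (Set.range A) :=
    Submodule.mem_of_forall_single_mem fun i hi => hsingle i fun hD => hi (if_pos hD)
  obtain ⟨w, hw⟩ := A.exists_transpose_mulVec_eq_of_mem_span_range hind
  refine ⟨hsingle, hind, w, ?_⟩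
  rw [hw, sum_sq_ite_zero_one_sub_one]
end

section
/- Let v ∈ ℝ^N be an arbitrary vector and let a be its most common entry (an element of ℝ attaining the maximal number of occurrences among the coordinates of v). Let d ≤ √(N/2) and let x be sampled uniformly from the set of {0,1}-vectors of length N with exactly d ones. Then for every w ∈ ℝ with w ≠ d·a, Pr[x · v = w] ≤ 1/2 + d²/N. -/
/-!
Let `m` be the multiplicity of the most common entry `a` and `k = N - m`. Revealing the elements
of the random set one at a time, the last one has to take a prescribed value, which it does in at
most `m` of the remaining `N - d + 1` ways; this settles the case `m ≤ N / 2`. Otherwise, a set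
whose sum is not `d • a` must contain one of the `k` coordinates with `v i ≠ a`, and the union
bound `k d / N` settles the case `2 d k ≤ N`. In the remaining case, the probabilities
`p_j = Pr[sum = w - (d - j) • a]` for `j`-sets start at `p_0 = 0` and obey
`p_{j+1} ≤ (m p_j + k (1 - p_j)) / (N - j)`, so they stay below the fixed point `k / (2k - d + 1)`,
which is at most `1/2 + d² / N` as soon as `2 d k > N ≥ 2 d²`.
-/

open Finset

lemma cast_choose_succ_right_eq {n j : ℕ} (hj : j ≤ n) :
    (n.choose (j + 1) : ℝ) * (j + 1) = n.choose j * (n - j) := by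
  have h := congrArg (Nat.cast (R := ℝ)) (Nat.choose_succ_right_eq n j)
  push_cast [Nat.cast_sub hj] at h
  exact h

namespace SubsetSum

variable {ι G : Type*} [Fintype ι] [AddCommGroup G] [DecidableEq G]

def subsetsSumEq (v : ι → G) (j : ℕ) (c : G) : Finset (Finset ι) :=
  {S ∈ powersetCard j univ | ∑ i ∈ S, v i = c}

noncomputable def subsetSumProb (v : ι → G) (j : ℕ) (c : G) : ℝ :=
  #(subsetsSumEq v j c) / #(powersetCard j (univ : Finset ι))

variable (v : ι → G)

lemma subsetSumProb_eq (j : ℕ) (c : G) :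
    subsetSumProb v j c = #(subsetsSumEq v j c) / (Fintype.card ι).choose j := by
  rw [subsetSumProb, card_powersetCard, card_univ]

lemma mem_subsetsSumEq {j : ℕ} {c : G} {S : Finset ι} :
    S ∈ subsetsSumEq v j c ↔ #S = j ∧ ∑ i ∈ S, v i = c := by
  simp [subsetsSumEq]

lemma subsetsSumEq_zero {c : G} (hc : c ≠ 0) : subsetsSumEq v 0 c = ∅ := by
  ext S
  simp only [mem_subsetsSumEq, card_eq_zero, notMem_empty, iff_false, not_and]
  rintro rfl
  simpa using hc.symm

variable [DecidableEq ι]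

lemma succ_mul_card_subsetsSumEq_succ_le (j : ℕ) (c : G) :
    (j + 1) * #(subsetsSumEq v (j + 1) c) ≤
      ∑ S ∈ powersetCard j univ, #{i | v i = c - ∑ k ∈ S, v k} := by
  have hcount := sum_card_bipartiteAbove_eq_sum_card_bipartiteBelow
    (s := subsetsSumEq v (j + 1) c) (t := powersetCard j univ) (r := fun T S => S ⊆ T)
  have habove : ∀ T ∈ subsetsSumEq v (j + 1) c,
      #((powersetCard j univ).bipartiteAbove (fun T S => S ⊆ T) T) = j + 1 := by
    intro T hT
    have hpow : (powersetCard j univ).bipartiteAbove (fun T S => S ⊆ T) T = powersetCard j T := by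
      ext S; simp [bipartiteAbove, mem_powersetCard, and_comm]
    rw [hpow, card_powersetCard, ((mem_subsetsSumEq v).1 hT).1, Nat.choose_succ_self_right]
  rw [sum_congr rfl habove, sum_const, smul_eq_mul, mul_comm] at hcount
  rw [hcount]
  refine sum_le_sum fun S hS => ?_
  have hbelow : (subsetsSumEq v (j + 1) c).bipartiteBelow (fun T S => S ⊆ T) S ⊆
      (({i | v i = c - ∑ k ∈ S, v k} : Finset ι)).image (insert · S) := by
    intro T hT
    obtain ⟨hT, hST⟩ := (mem_bipartiteBelow _).1 hT
    obtain ⟨hcardT, hsumT⟩ := (mem_subsetsSumEq v).1 hT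
    obtain ⟨i, hiS, rfl⟩ := exists_eq_insert_iff.2
      ⟨hST, by rw [hcardT, (mem_powersetCard.1 hS).2]⟩
    rw [sum_insert hiS] at hsumT
    exact mem_image.2 ⟨i, by simp [← hsumT], rfl⟩
  exact (card_le_card hbelow).trans card_image_le

lemma succ_mul_card_subsetsSumEq_succ_le_mul_choose {M : ℕ} (hM : ∀ b, #{i | v i = b} ≤ M)
    (j : ℕ) (c : G) :
    (j + 1) * #(subsetsSumEq v (j + 1) c) ≤ M * (Fintype.card ι).choose j :=
  calc (j + 1) * #(subsetsSumEq v (j + 1) c)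
      _ ≤ ∑ S ∈ powersetCard j univ, #{i | v i = c - ∑ k ∈ S, v k} :=
        succ_mul_card_subsetsSumEq_succ_le v j c
      _ ≤ #(powersetCard j (univ : Finset ι)) * M := sum_le_card_nsmul _ _ _ fun _ _ => hM _
      _ = M * (Fintype.card ι).choose j := by rw [card_powersetCard, card_univ, mul_comm]

/-- Once a `j`-set with sum `c` is fixed, the missing value is `a`; otherwise it is some value
other than `a`, which occurs at most `#{i | v i ≠ a}` times. -/
lemma succ_mul_card_subsetsSumEq_add_le (j : ℕ) (a c : G) :
    (j + 1) * #(subsetsSumEq v (j + 1) (c + a)) + #{i | v i ≠ a} * #(subsetsSumEq v j c) ≤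
      #{i | v i = a} * #(subsetsSumEq v j c) + #{i | v i ≠ a} * (Fintype.card ι).choose j := by
  set m := #{i | v i = a}
  set k := #{i | v i ≠ a}
  have hsplit := sum_filter_add_sum_filter_not (powersetCard j univ)
    (fun S => ∑ i ∈ S, v i = c) (fun S => #{i | v i = c + a - ∑ k ∈ S, v k})
  have hhit : ∑ S ∈ subsetsSumEq v j c, #{i | v i = c + a - ∑ k ∈ S, v k} ≤
      #(subsetsSumEq v j c) * m :=
    sum_le_card_nsmul _ _ _ fun S hS => by rw [((mem_subsetsSumEq v).1 hS).2, add_sub_cancel_left]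
  have hmiss : ∑ S ∈ powersetCard j univ with ¬∑ i ∈ S, v i = c,
      #{i | v i = c + a - ∑ k ∈ S, v k} ≤ #{S ∈ powersetCard j univ | ¬∑ i ∈ S, v i = c} * k := by
    refine sum_le_card_nsmul _ _ _ fun S hS => card_le_card fun i hi => ?_
    simp only [mem_filter, mem_univ, true_and] at hi hS ⊢
    intro hia
    rw [hia, eq_sub_iff_add_eq, add_comm, add_left_inj] at hi
    exact hS.2 hi
  have hcard := card_filter_add_card_filter_not (s := powersetCard j (univ : Finset ι))
    (fun S => ∑ i ∈ S, v i = c)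
  rw [card_powersetCard, card_univ] at hcard
  have hrev := succ_mul_card_subsetsSumEq_succ_le v j (c + a)
  change #(subsetsSumEq v j c) + _ = _ at hcard
  change ∑ S ∈ subsetsSumEq v j c, _ + _ = _ at hsplit
  calc (j + 1) * #(subsetsSumEq v (j + 1) (c + a)) + k * #(subsetsSumEq v j c)
      _ ≤ (#(subsetsSumEq v j c) * m + #{S ∈ powersetCard j univ | ¬∑ i ∈ S, v i = c} * k) +
          k * #(subsetsSumEq v j c) := by
        gcongr
        exact hrev.trans (hsplit ▸ add_le_add hhit hmiss)
      _ = m * #(subsetsSumEq v j c) +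
          k * (#(subsetsSumEq v j c) + #{S ∈ powersetCard j univ | ¬∑ i ∈ S, v i = c}) := by ring
      _ = m * #(subsetsSumEq v j c) + k * (Fintype.card ι).choose j := by rw [hcard]

lemma card_subsetsSumEq_le_card_ne_mul_choose (j : ℕ) {a c : G} (hc : c ≠ (j + 1) • a) :
    #(subsetsSumEq v (j + 1) c) ≤ #{i | v i ≠ a} * (Fintype.card ι - 1).choose j := by
  have hhit : ∀ T ∈ subsetsSumEq v (j + 1) c,
      1 ≤ #(({i | v i ≠ a} : Finset ι).bipartiteAbove (fun T i => i ∈ T) T) := by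
    intro T hT
    obtain ⟨hcardT, hsumT⟩ := (mem_subsetsSumEq v).1 hT
    rw [one_le_card]
    by_contra! hall
    refine hc (hsumT ▸ ?_)
    rw [sum_congr rfl (s₂ := T) (g := fun _ => a) fun i hi => ?_, sum_const, hcardT]
    by_contra hia
    have hi' : i ∈ ({i | v i ≠ a} : Finset ι).bipartiteAbove (fun T i => i ∈ T) T := by
      simp [bipartiteAbove, hi, hia]
    simp [hall] at hi'
  have hfiber : ∀ i ∈ ({i | v i ≠ a} : Finset ι),
      #((subsetsSumEq v (j + 1) c).bipartiteBelow (fun T i => i ∈ T) i) ≤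
        (Fintype.card ι - 1).choose j := by
    intro i _
    calc #((subsetsSumEq v (j + 1) c).bipartiteBelow (fun T i => i ∈ T) i)
        _ ≤ #{T ∈ powersetCard (j + 1) univ | {i} ⊆ T} :=
          card_le_card fun T hT => by
            simp_all [bipartiteBelow, mem_subsetsSumEq, mem_powersetCard]
        _ = (Fintype.card ι - 1).choose j := by
          rw [card_filter_powersetCard_subset] <;> simp
  simpa using card_mul_le_card_mul (fun T i => i ∈ T) hhit hfiber

lemma subsetSumProb_succ_le_div {M : ℕ} (hM : ∀ b, #{i | v i = b} ≤ M) {j : ℕ}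
    (hj : j < Fintype.card ι) (c : G) :
    subsetSumProb v (j + 1) c ≤ M / (Fintype.card ι - j) := by
  have hrev : ((j + 1) * #(subsetsSumEq v (j + 1) c) : ℝ) ≤ M * (Fintype.card ι).choose j := by
    exact_mod_cast succ_mul_card_subsetsSumEq_succ_le_mul_choose v hM j c
  have hchoose := cast_choose_succ_right_eq hj.le
  have hpos : (0 : ℝ) < (Fintype.card ι).choose (j + 1) := by exact_mod_cast Nat.choose_pos hj
  have hNj : (0 : ℝ) < Fintype.card ι - j := by
    rw [sub_pos]; exact_mod_cast hj
  rw [subsetSumProb_eq, div_le_div_iff₀ hpos hNj]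
  refine le_of_mul_le_mul_left ?_ (by positivity : (0 : ℝ) < j + 1)
  calc ((j : ℝ) + 1) * (#(subsetsSumEq v (j + 1) c) * (Fintype.card ι - j))
      _ ≤ M * (Fintype.card ι).choose j * (Fintype.card ι - j) := by
        rw [← mul_assoc]; gcongr
      _ = (j + 1) * (M * (Fintype.card ι).choose (j + 1)) := by rw [mul_assoc, ← hchoose]; ring

lemma subsetSumProb_succ_le_of_ne {j : ℕ} (hj : j < Fintype.card ι) {a c : G}
    (hc : c ≠ (j + 1) • a) :
    subsetSumProb v (j + 1) c ≤ #{i | v i ≠ a} * (j + 1) / Fintype.card ι := by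
  have hunion : (#(subsetsSumEq v (j + 1) c) : ℝ) ≤
      #{i | v i ≠ a} * (Fintype.card ι - 1).choose j := by
    exact_mod_cast card_subsetsSumEq_le_card_ne_mul_choose v j hc
  have hchoose : (Fintype.card ι : ℝ) * (Fintype.card ι - 1).choose j =
      (Fintype.card ι).choose (j + 1) * (j + 1) := by
    have := Nat.add_one_mul_choose_eq (Fintype.card ι - 1) j
    rw [Nat.sub_add_cancel (by omega)] at this
    exact_mod_cast this
  have hpos : (0 : ℝ) < (Fintype.card ι).choose (j + 1) := by exact_mod_cast Nat.choose_pos hj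
  have hN : (0 : ℝ) < Fintype.card ι := by exact_mod_cast hj.trans_le' (Nat.zero_le j)
  rw [subsetSumProb_eq, div_le_div_iff₀ hpos hN]
  calc (#(subsetsSumEq v (j + 1) c) : ℝ) * Fintype.card ι
      _ ≤ #{i | v i ≠ a} * (Fintype.card ι - 1).choose j * Fintype.card ι := by gcongr
      _ = #{i | v i ≠ a} * (j + 1) * (Fintype.card ι).choose (j + 1) := by
        rw [mul_assoc, mul_comm _ (Fintype.card ι : ℝ), hchoose]; ring

/-- `hfix` says that `L` is a super-solution of the recursion `p ↦ (k + (m - k) p) / (N - j)`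
obeyed by the probabilities `subsetSumProb v j (c - (n - j) • a)`. -/
lemma card_subsetsSumEq_le_mul_choose {a : G} {L : ℝ} {n : ℕ} (hn : n ≤ Fintype.card ι)
    (hL : 0 ≤ L) (hkm : #{i | v i ≠ a} ≤ #{i | v i = a})
    (hfix : ∀ j < n, (#{i | v i ≠ a} : ℝ) ≤ L * (2 * #{i | v i ≠ a} - j)) :
    ∀ j ≤ n, ∀ c : G, c ≠ j • a →
      (#(subsetsSumEq v j c) : ℝ) ≤ L * (Fintype.card ι).choose j := by
  intro j
  induction j with
  | zero =>
    intro _ c hc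
    rw [subsetsSumEq_zero v (by simpa using hc), card_empty, Nat.cast_zero]
    positivity
  | succ j ih =>
    intro hj c hc
    set m := #{i | v i = a}
    set k := #{i | v i ≠ a}
    have hmk : (m : ℝ) + k = Fintype.card ι := by
      exact_mod_cast card_filter_add_card_filter_not (s := univ) (fun i => v i = a)
    have hstep : ((j + 1) * #(subsetsSumEq v (j + 1) c) + k * #(subsetsSumEq v j (c - a)) : ℝ) ≤
        m * #(subsetsSumEq v j (c - a)) + k * (Fintype.card ι).choose j := by
      exact_mod_cast sub_add_cancel c a ▸ succ_mul_card_subsetsSumEq_add_le v j a (c - a)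
    have hprev := ih (by omega) (c - a) (by rwa [ne_eq, sub_eq_iff_eq_add, ← succ_nsmul])
    have hchoose := cast_choose_succ_right_eq (n := Fintype.card ι) (by omega : j ≤ _)
    have hkm' : (k : ℝ) ≤ m := by exact_mod_cast hkm
    have hfixj := hfix j hj
    refine le_of_mul_le_mul_left ?_ (by positivity : (0 : ℝ) < j + 1)
    calc ((j : ℝ) + 1) * #(subsetsSumEq v (j + 1) c)
        _ ≤ (m - k) * #(subsetsSumEq v j (c - a)) + k * (Fintype.card ι).choose j := by
          linarith
        _ ≤ (m - k) * (L * (Fintype.card ι).choose j) + k * (Fintype.card ι).choose j := by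
          gcongr
        _ ≤ (Fintype.card ι).choose j * (L * (Fintype.card ι - j)) := by
          rw [← hmk]; nlinarith [Nat.cast_nonneg (α := ℝ) ((Fintype.card ι).choose j)]
        _ = (j + 1) * (L * (Fintype.card ι).choose (j + 1)) := by
          rw [mul_left_comm, ← hchoose]; ring

lemma subsetSumProb_le_of_fixedPoint {a : G} {L : ℝ} {n : ℕ} (hn : n ≤ Fintype.card ι)
    (hL : 0 ≤ L) (hkm : #{i | v i ≠ a} ≤ #{i | v i = a})
    (hfix : ∀ j < n, (#{i | v i ≠ a} : ℝ) ≤ L * (2 * #{i | v i ≠ a} - j)) {c : G}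
    (hc : c ≠ n • a) :
    subsetSumProb v n c ≤ L := by
  rw [subsetSumProb_eq, div_le_iff₀ (by exact_mod_cast Nat.choose_pos hn)]
  exact card_subsetsSumEq_le_mul_choose v hn hL hkm hfix n le_rfl c hc

lemma div_sub_le_half_add_sq_div {N m e : ℝ} (he : 0 ≤ e) (hN : 2 * (e + 1) ^ 2 ≤ N)
    (hm : 2 * m ≤ N) :
    m / (N - e) ≤ 1 / 2 + (e + 1) ^ 2 / N := by
  have hNe : N / 2 ≤ N - e := by nlinarith
  have hN0 : 0 < N := by nlinarith
  rw [div_add_div _ _ two_ne_zero hN0.ne', div_le_div_iff₀ (by linarith) (by positivity)]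
  nlinarith [mul_le_mul_of_nonneg_left hNe (by positivity : (0 : ℝ) ≤ 2 * (e + 1) ^ 2),
    mul_le_mul_of_nonneg_right hm hN0.le, mul_nonneg (by positivity : 0 ≤ e ^ 2 + e + 1) hN0.le]

lemma div_two_mul_sub_le_half_add_sq_div {N k e : ℝ} (he : 0 ≤ e) (hN : 2 * (e + 1) ^ 2 ≤ N)
    (hk : N < 2 * (e + 1) * k) :
    k / (2 * k - e) ≤ 1 / 2 + (e + 1) ^ 2 / N := by
  have hke : e + 1 < k := by nlinarith
  have hN0 : 0 < N := by nlinarith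
  rw [div_add_div _ _ two_ne_zero hN0.ne', div_le_div_iff₀ (by linarith) (by positivity)]
  nlinarith [mul_lt_mul_of_pos_left hk (by positivity : (0 : ℝ) < e + 1)]

theorem subsetSumProb_le_half_add_sq_div {a w : G} {d : ℕ}
    (ha : ∀ b, #{i | v i = b} ≤ #{i | v i = a}) (hd : 2 * d ^ 2 ≤ Fintype.card ι)
    (hw : w ≠ d • a) :
    subsetSumProb v d w ≤ 1 / 2 + d ^ 2 / Fintype.card ι := by
  obtain _ | e := d
  · rw [subsetSumProb, subsetsSumEq_zero v (by simpa using hw)]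
    simp
  set m := #{i | v i = a}
  set k := #{i | v i ≠ a}
  have hmk : (m : ℝ) + k = Fintype.card ι := by
    exact_mod_cast card_filter_add_card_filter_not (s := univ) (fun i => v i = a)
  have he : e < Fintype.card ι := by nlinarith
  have hN : 2 * ((e : ℝ) + 1) ^ 2 ≤ Fintype.card ι := by exact_mod_cast hd
  push_cast
  rcases le_or_gt (2 * (m : ℝ)) (Fintype.card ι) with hm | hm
  · exact (subsetSumProb_succ_le_div v ha he w).trans
      (div_sub_le_half_add_sq_div e.cast_nonneg hN hm)
  rcases le_or_gt (2 * (e + 1) * k : ℝ) (Fintype.card ι) with hk | hk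
  · calc subsetSumProb v (e + 1) w
        _ ≤ k * (e + 1) / Fintype.card ι := subsetSumProb_succ_le_of_ne v he hw
        _ ≤ 1 / 2 := by rw [div_le_iff₀ (by linarith)]; linarith
        _ ≤ _ := le_add_of_nonneg_right (by positivity)
  have hkm : k ≤ m := by exact_mod_cast (by linarith : (k : ℝ) ≤ m)
  have hpos : (0 : ℝ) < 2 * k - e := by nlinarith
  refine (subsetSumProb_le_of_fixedPoint v (L := k / (2 * k - e)) (by omega) (by positivity) hkm
    (fun j hj => ?_) hw).trans (div_two_mul_sub_le_half_add_sq_div e.cast_nonneg hN hk)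
  have hje : (j : ℝ) ≤ e := by exact_mod_cast Nat.lt_succ_iff.1 hj
  calc (k : ℝ)
      _ = k / (2 * k - e) * (2 * k - e) := (div_mul_cancel₀ _ hpos.ne').symm
      _ ≤ k / (2 * k - e) * (2 * k - j) := by gcongr

end SubsetSum

/-- Anti-concentration for sparse regular vectors: if `a` is a most common entry of
`v ∈ ℝ^N`, `d ≤ √(N/2)`, and `x` is a uniformly random {0,1}-vector with exactly `d` ones
(encoded as a uniformly random `d`-subset `S`, with `x · v = ∑_{i ∈ S} v i`), then for every
`w ≠ d·a` the probability that `x · v = w` is at most `1/2 + d²/N`. -/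
theorem stmt13 {N d : ℕ} (v : Fin N → ℝ) (a : ℝ)
    (ha : ∀ b : ℝ, Set.ncard {i | v i = b} ≤ Set.ncard {i | v i = a})
    (hd : (d : ℝ) ≤ Real.sqrt (N / 2))
    (w : ℝ) (hw : w ≠ d * a) :
    (((Finset.powersetCard d (Finset.univ : Finset (Fin N))).filter
        (fun S : Finset (Fin N) => ∑ i ∈ S, v i = w)).card : ℝ) /
      ((Finset.powersetCard d (Finset.univ : Finset (Fin N))).card : ℝ)
      ≤ 1 / 2 + (d : ℝ) ^ 2 / N := by
  have hcount : ∀ b, Set.ncard {i | v i = b} = #{i | v i = b} := fun b => by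
    rw [Set.ncard_eq_toFinset_card', Set.toFinset_ofPred]
  have hd' : 2 * d ^ 2 ≤ N := by
    rw [Real.le_sqrt (by positivity) (by positivity)] at hd
    exact_mod_cast (by linarith : (2 * d ^ 2 : ℝ) ≤ N)
  have := SubsetSum.subsetSumProb_le_half_add_sq_div v (fun b => by simpa [hcount] using ha b)
    (by simpa using hd') (by rwa [nsmul_eq_mul])
  rwa [Fintype.card_fin] at this
end

section
/- Let X_1, …, X_d be i.i.d. random variables taking values in ℝ, and suppose a ∈ ℝ satisfies Pr[X_1 = a] ≥ Pr[X_1 = b] for every b ∈ ℝ. Then for every w ∈ ℝ with w ≠ d·a, Pr[X_1 + ⋯ + X_d = w] ≤ 1/2. -/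
/-!
The law of a partial sum `X₁ + ⋯ + X_k` is `μ ∗ ν`, where `μ` is the common law and `ν` the law
of `X₁ + ⋯ + X_{k-1}`, and `(μ ∗ ν){w} = ∫ ν{w - x} dμ(x)`. Suppose inductively (starting from
`ν = δ₀`) that `ν{y} ≤ 1/2` for all `y ≠ c := (k-1)a`, and let `w ≠ a + c`. Then
`u := ν{w - a} ≤ 1/2`, the point `x = w - c` has weight `ν{c} ≤ 1 - u`, and every other point has
weight at most `1/2`. As `μ{w - c} ≤ μ{a}`, we get
`u μ{a} + (1 - u) μ{w - c} ≤ (μ{a} + μ{w - c}) / 2`, so `(μ ∗ ν){w} ≤ 1/2`.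
-/

open MeasureTheory ProbabilityTheory ENNReal NNReal

theorem ENNReal.mul_add_mul_add_inv_two_mul_le_inv_two {u v p q r : ℝ≥0∞} (hu : u ≤ 2⁻¹)
    (huv : u + v ≤ 1) (hqp : q ≤ p) (hpqr : p + q + r ≤ 1) :
    u * p + v * q + 2⁻¹ * r ≤ 2⁻¹ := by
  have hp : p ≤ 1 := le_self_add.trans (le_self_add.trans hpqr)
  lift u to ℝ≥0 using ne_top_of_le_ne_top (by simp) hu
  lift v to ℝ≥0 using ne_top_of_le_ne_top one_ne_top (le_add_self.trans huv)
  lift p to ℝ≥0 using ne_top_of_le_ne_top one_ne_top hp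
  lift q to ℝ≥0 using ne_top_of_le_ne_top coe_ne_top hqp
  lift r to ℝ≥0 using ne_top_of_le_ne_top one_ne_top (le_add_self.trans hpqr)
  rw [← coe_inv_two] at *
  norm_cast at *
  rw [← NNReal.coe_le_coe] at *
  push_cast at *
  nlinarith [mul_le_mul_of_nonneg_right hu (sub_nonneg.2 hqp)]

namespace MeasureTheory.Measure

section SingletonClass

variable {α : Type*} [MeasurableSpace α] [MeasurableSingletonClass α] {μ : Measure α}

theorem lintegral_eq_add_add_setLIntegral_compl_pair (f : α → ℝ≥0∞) {a b : α} (hab : a ≠ b) :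
    ∫⁻ x, f x ∂μ = f a * μ {a} + f b * μ {b} + ∫⁻ x in {a, b}ᶜ, f x ∂μ := by
  rw [← lintegral_add_compl f (measurableSet_singleton b |>.insert a),
    lintegral_insert (Set.notMem_singleton_iff.2 hab), lintegral_singleton]

theorem measure_singleton_add_add_compl_pair [IsProbabilityMeasure μ] {a b : α} (hab : a ≠ b) :
    μ {a} + μ {b} + μ {a, b}ᶜ = 1 := by
  simpa using (lintegral_eq_add_add_setLIntegral_compl_pair (μ := μ) 1 hab).symm

theorem measure_singleton_add_singleton_le_one [IsProbabilityMeasure μ] {a b : α} (hab : a ≠ b) :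
    μ {a} + μ {b} ≤ 1 :=
  measure_singleton_add_add_compl_pair (μ := μ) hab ▸ le_self_add

end SingletonClass

theorem conv_singleton_apply (μ : Measure ℝ) {ν : Measure ℝ} [SFinite ν] (w : ℝ) :
    (μ ∗ ν) {w} = ∫⁻ x, ν {w - x} ∂μ := by
  have hw : MeasurableSet ((fun p : ℝ × ℝ ↦ p.1 + p.2) ⁻¹' {w}) :=
    measurable_add (measurableSet_singleton w)
  rw [conv, map_apply measurable_add (measurableSet_singleton w), prod_apply hw]
  congr! 3 with x
  ext y
  simp [eq_sub_iff_add_eq']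

theorem conv_singleton_le_inv_two {μ ν : Measure ℝ} [IsProbabilityMeasure μ]
    [IsProbabilityMeasure ν] {a c : ℝ} (hmode : ∀ b, μ {b} ≤ μ {a})
    (hν : ∀ y ≠ c, ν {y} ≤ 2⁻¹) {w : ℝ} (hw : w ≠ a + c) :
    (μ ∗ ν) {w} ≤ 2⁻¹ := by
  have hwa : w - a ≠ c := by contrapose! hw; linarith
  have ha : a ≠ w - c := by contrapose! hw; linarith
  have hrest : ∫⁻ x in {a, w - c}ᶜ, ν {w - x} ∂μ ≤ 2⁻¹ * μ {a, w - c}ᶜ := by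
    rw [← setLIntegral_const]
    refine setLIntegral_mono' (measurableSet_singleton _ |>.insert a).compl fun x hx ↦ hν _ ?_
    contrapose! hx
    simp [← hx]
  have hweights : ν {w - a} + ν {w - (w - c)} ≤ 1 := by
    rw [sub_sub_cancel w c]
    exact measure_singleton_add_singleton_le_one hwa
  rw [conv_singleton_apply, lintegral_eq_add_add_setLIntegral_compl_pair _ ha]
  exact (add_le_add_right hrest _).trans <| ENNReal.mul_add_mul_add_inv_two_mul_le_inv_two
    (hν _ hwa) hweights (hmode _) (measure_singleton_add_add_compl_pair ha).le

end MeasureTheory.Measure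

theorem ProbabilityTheory.iIndepFun.map_finsetSum_singleton_le_inv_two {ι Ω : Type*}
    [MeasurableSpace Ω] {P : Measure Ω} [IsProbabilityMeasure P] {X : ι → Ω → ℝ}
    (hindep : iIndepFun X P) (hmeas : ∀ i, Measurable (X i)) {μ : Measure ℝ}
    (hlaw : ∀ i, P.map (X i) = μ) {a : ℝ} (hmode : ∀ b, μ {b} ≤ μ {a}) (s : Finset ι) {w : ℝ}
    (hw : w ≠ s.card * a) :
    P.map (∑ i ∈ s, X i) {w} ≤ 2⁻¹ := by
  induction s using Finset.cons_induction generalizing w with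
  | empty =>
    rw [Finset.sum_empty, Pi.zero_def, Measure.map_const]
    simp_all
  | cons i t hi ih =>
    have hsum : Measurable (∑ j ∈ t, X j) :=
      Finset.sum_induction _ Measurable (fun _ _ ↦ .add) measurable_zero fun j _ ↦ hmeas j
    have : IsProbabilityMeasure μ :=
      hlaw i ▸ Measure.isProbabilityMeasure_map (hmeas i).aemeasurable
    have : IsProbabilityMeasure (P.map (∑ j ∈ t, X j)) :=
      Measure.isProbabilityMeasure_map hsum.aemeasurable
    rw [Finset.sum_cons, (hindep.indepFun_finsetSum_of_notMem hmeas hi).symm.map_add_eq_map_conv_map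
      (hmeas i) hsum, hlaw i]
    refine Measure.conv_singleton_le_inv_two hmode (fun y hy ↦ ih hy) ?_
    rwa [Finset.card_cons, Nat.cast_succ, add_one_mul, add_comm] at hw

open MeasureTheory ProbabilityTheory in
theorem stmt14_general {Ω : Type*} [MeasureSpace Ω] [IsProbabilityMeasure (ℙ : Measure Ω)]
    {d : ℕ} (hd : 0 < d) (X : Fin d → Ω → ℝ)
    (hmeas : ∀ i, Measurable (X i))
    (hindep : iIndepFun X ℙ)
    (hident : ∀ i j, Measure.map (X i) ℙ = Measure.map (X j) ℙ)
    (a : ℝ) (ha : ∀ b : ℝ, ℙ {ω | X ⟨0, hd⟩ ω = b} ≤ ℙ {ω | X ⟨0, hd⟩ ω = a})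
    (w : ℝ) (hw : w ≠ d * a) :
    ℙ {ω | ∑ i, X i ω = w} ≤ 1 / 2 := by
  have hmode (b : ℝ) :
      (ℙ : Measure Ω).map (X ⟨0, hd⟩) {b} ≤ (ℙ : Measure Ω).map (X ⟨0, hd⟩) {a} := by
    simp only [Measure.map_apply (hmeas _) (measurableSet_singleton _)]
    exact ha b
  have key := hindep.map_finsetSum_singleton_le_inv_two hmeas (fun i ↦ hident i ⟨0, hd⟩) hmode
    Finset.univ (w := w) (by simpa using hw)
  rw [Finset.sum_fn, Measure.map_apply (Finset.measurable_sum _ fun i _ ↦ hmeas i)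
    (measurableSet_singleton w)] at key
  rw [one_div]
  exact key

open MeasureTheory ProbabilityTheory in
/-- If `X₁, …, X_d` are i.i.d. real random variables with finite support and `a` is a mode of
their common distribution, then for every `w ≠ d·a`, `Pr[X₁ + ⋯ + X_d = w] ≤ 1/2`. -/
theorem stmt14 {Ω : Type*} [MeasureSpace Ω] [IsProbabilityMeasure (ℙ : Measure Ω)]
    {d : ℕ} (hd : 0 < d) (X : Fin d → Ω → ℝ)
    (hmeas : ∀ i, Measurable (X i))
    (hindep : iIndepFun X ℙ)
    (hident : ∀ i j, Measure.map (X i) ℙ = Measure.map (X j) ℙ)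
    (hfin : ∀ i, (Set.range (X i)).Finite)
    (a : ℝ) (ha : ∀ b : ℝ, ℙ {ω | X ⟨0, hd⟩ ω = b} ≤ ℙ {ω | X ⟨0, hd⟩ ω = a})
    (w : ℝ) (hw : w ≠ d * a) :
    ℙ {ω | ∑ i, X i ω = w} ≤ 1 / 2 :=
  stmt14_general hd X hmeas hindep hident a ha w hw
end

section
/- Let X ∼ HypGeo(A, B, n) and set 1 − q = B/A. Then for every k, Pr[X = k] ≤ C(n,k) (1−q)^k (q + k/(A−n))^{n−k}. -/
/-!
Write `x⁽ᵐ⁾` for the falling factorial `x.descFactorial m`. Then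
`C(B,k) C(A-B,n-k) / C(A,n) = C(n,k) · B⁽ᵏ⁾/A⁽ᵏ⁾ · (A-B)⁽ⁿ⁻ᵏ⁾/(A-k)⁽ⁿ⁻ᵏ⁾`,
and both ratios are bounded factor by factor: `(B-i)/(A-i) ≤ B/A`, and for `i < n-k`
`(A-B-i)/(A-k-i) = (A-B-k-i)/(A-k-i) + k/(A-k-i) ≤ (A-B)/A + k/(A-n)`.
-/

open Finset

theorem Nat.cast_descFactorial_eq_prod_range {R : Type*} [CommRing R] (x m : ℕ) :
    (x.descFactorial m : R) = ∏ i ∈ range m, ((x : R) - i) := by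
  rw [← descPochhammer_eval_eq_descFactorial, descPochhammer_eval_eq_prod_range]

theorem sub_le_div_mul_sub {x y c : ℝ} (hc : 0 ≤ c) (hxy : x ≤ y) (hy : 0 < y) :
    x - c ≤ x / y * (y - c) := by
  rw [div_mul_eq_mul_div, le_div_iff₀ hy]
  nlinarith

theorem Nat.cast_descFactorial_div_le_pow {x y m : ℕ} {r : ℝ} (hr : 0 ≤ r) (hmy : m ≤ y)
    (h : ∀ i < m, (x : ℝ) - i ≤ r * ((y : ℝ) - i)) :
    (x.descFactorial m : ℝ) / y.descFactorial m ≤ r ^ m := by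
  have hy : (0 : ℝ) < y.descFactorial m := by
    exact_mod_cast Nat.descFactorial_pos.mpr hmy
  rw [div_le_iff₀ hy]
  rcases lt_or_ge x m with hxm | hmx
  · rw [Nat.descFactorial_eq_zero_iff_lt.mpr hxm, Nat.cast_zero]
    positivity
  simp only [Nat.cast_descFactorial_eq_prod_range]
  calc ∏ i ∈ range m, ((x : ℝ) - i)
      ≤ ∏ i ∈ range m, (r * ((y : ℝ) - i)) := by
        refine prod_le_prod (fun i hi => ?_) (fun i hi => h i (mem_range.1 hi))
        exact sub_nonneg.2 (by exact_mod_cast ((mem_range.1 hi).trans_le hmx).le)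
    _ = r ^ m * ∏ i ∈ range m, ((y : ℝ) - i) := by
        rw [prod_mul_distrib, prod_const, card_range]

theorem Nat.choose_mul_choose_mul_descFactorial (x y z : ℕ) {n k : ℕ} (hkn : k ≤ n) :
    x.choose k * y.choose (n - k) * z.descFactorial n
      = n.choose k * (x.descFactorial k * y.descFactorial (n - k)) * z.choose n := by
  apply Nat.eq_of_mul_eq_mul_left (Nat.mul_pos k.factorial_pos (n - k).factorial_pos)
  simp only [Nat.descFactorial_eq_factorial_mul_choose]
  rw [← Nat.choose_mul_factorial_mul_factorial hkn]
  ring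

theorem Nat.cast_choose_mul_choose_div_choose (x y z : ℕ) {n k : ℕ} (hkn : k ≤ n)
    (hnz : n ≤ z) :
    (x.choose k * y.choose (n - k) : ℝ) / z.choose n
      = n.choose k * ((x.descFactorial k : ℝ) / z.descFactorial k)
          * ((y.descFactorial (n - k) : ℝ) / (z - k).descFactorial (n - k)) := by
  have hz : (z.descFactorial n : ℝ) = (z - k).descFactorial (n - k) * z.descFactorial k := by
    exact_mod_cast (Nat.descFactorial_mul_descFactorial hkn).symm
  have hzn : (z.descFactorial n : ℝ) ≠ 0 := by
    exact_mod_cast (Nat.descFactorial_pos.mpr hnz).ne'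
  have hzn' : (z.choose n : ℝ) ≠ 0 := by exact_mod_cast (Nat.choose_pos hnz).ne'
  rw [eq_comm, mul_assoc, _root_.div_mul_div_comm, mul_comm (z.descFactorial k : ℝ), ← hz,
    mul_div_assoc', div_eq_div_iff hzn hzn']
  exact_mod_cast (Nat.choose_mul_choose_mul_descFactorial x y z hkn).symm

theorem stmt17_general (A B n k : ℕ) (hB : B ≤ A) (hn : n < A) (hkn : k ≤ n) :
    (B.choose k : ℝ) * ((A - B).choose (n - k)) / (A.choose n)
      ≤ (n.choose k : ℝ) * ((B : ℝ) / A) ^ k *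
          ((1 - (B : ℝ) / A) + (k : ℝ) / ((A : ℝ) - n)) ^ (n - k) := by
  have hA : (0 : ℝ) < A := by exact_mod_cast (Nat.zero_le n).trans_lt hn
  have hAn : (0 : ℝ) < A - n := sub_pos.2 (by exact_mod_cast hn)
  have hBA : (B : ℝ) ≤ A := by exact_mod_cast hB
  have hq : 1 - (B : ℝ) / A = (A - B) / A := by field_simp
  rw [Nat.cast_choose_mul_choose_div_choose B (A - B) A hkn hn.le]
  have hsample : (B.descFactorial k : ℝ) / A.descFactorial k ≤ ((B : ℝ) / A) ^ k :=
    Nat.cast_descFactorial_div_le_pow (by positivity) (by omega)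
      fun i _ => sub_le_div_mul_sub i.cast_nonneg hBA hA
  have hrest : ((A - B).descFactorial (n - k) : ℝ) / (A - k).descFactorial (n - k)
      ≤ ((1 - (B : ℝ) / A) + (k : ℝ) / ((A : ℝ) - n)) ^ (n - k) := by
    refine Nat.cast_descFactorial_div_le_pow (by rw [hq]; positivity) (by omega) fun i hi => ?_
    have hki : (k : ℝ) + i ≤ n := by exact_mod_cast (by omega : k + i ≤ n)
    have hfirst := sub_le_div_mul_sub (c := k + i) (by positivity)
      (sub_le_self (A : ℝ) B.cast_nonneg) hA
    have hsecond : (k : ℝ) ≤ k / (A - n) * (A - k - i) := by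
      rw [div_mul_eq_mul_div, le_div_iff₀ hAn]
      exact mul_le_mul_of_nonneg_left (by linarith) k.cast_nonneg
    rw [Nat.cast_sub hB, Nat.cast_sub (hkn.trans hn.le), hq]
    linarith
  gcongr

/-- Pointwise bound on the hypergeometric mass function: for `X ∼ HypGeo(A, B, n)` and
`1 - q = B/A`, `Pr[X = k] ≤ C(n,k) (1-q)^k (q + k/(A-n))^{n-k}`. -/
theorem stmt17 (A B n k : ℕ) (hB : B ≤ A) (hn : n < A) (hkB : k ≤ B) (hkn : k ≤ n) :
    (B.choose k : ℝ) * ((A - B).choose (n - k)) / (A.choose n)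
      ≤ (n.choose k : ℝ) * ((B : ℝ) / A) ^ k *
          ((1 - (B : ℝ) / A) + (k : ℝ) / ((A : ℝ) - n)) ^ (n - k) :=
  stmt17_general A B n k hB hn hkn
end
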